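/- arXiv:math/0610054 — 3 statements merged into one kernel-verified Lean document; each statement's English description precedes it below -/
import Mathlib

section
/- The ring A^{n−k,k} is indecomposable: its only central idempotents are 0 and 1. -/
noncomputable section
attribute [local instance 0] Classical.propDecidable

/-- A crossingless (perfect, noncrossing) matching of the `2 * n` points `0, 1, …, 2n-1`. -/
structure Matching (n : ℕ) where
  f : Fin (2 * n) → Fin (2 * n)
  invol : Function.Involutive f
  noFix : ∀ i, f i ≠ i
  noncross : ∀ i j : Fin (2 * n), (i : ℕ) < (j : ℕ) → (j : ℕ) < (f i : ℕ) →
      (i : ℕ) < (f j : ℕ) ∧ (f j : ℕ) < (f i : ℕ)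

instance (n : ℕ) : Finite (Matching n) :=
  Finite.of_injective (fun a => a.f) (by
    rintro ⟨f, _, _, _⟩ ⟨g, _, _, _⟩ h
    simp only at h
    subst h
    rfl)

/-- `i` lies on the left platform (the first `n - k` points). -/
def onLeft (n k : ℕ) (i : Fin (2 * n)) : Prop := (i : ℕ) < n - k

/-- `i` lies on the right platform (the last `k` points). -/
def onRight (n k : ℕ) (i : Fin (2 * n)) : Prop := 2 * n - k ≤ (i : ℕ)

/-- Membership in `B^{n-k,k}`: a crossingless matching with no arc joining two points of
the left platform and no arc joining two points of the right platform. -/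
def Matching.inB (n k : ℕ) (a : Matching n) : Prop :=
  (∀ i, onLeft n k i → ¬ onLeft n k (a.f i)) ∧
  (∀ i, onRight n k i → ¬ onRight n k (a.f i))

/-- The set `B^{n-k,k}` of crossingless matchings with platforms of sizes `n-k` and `k`. -/
def BB (n k : ℕ) : Type := {a : Matching n // a.inB n k}

instance (n k : ℕ) : Finite (BB n k) := Subtype.finite
instance (n k : ℕ) : Fintype (BB n k) := Fintype.ofFinite _

/-- The setoid on points whose classes are the circles of the closed 1-manifold `W(a)b`. -/
def circleSetoid (n : ℕ) (a b : Matching n) : Setoid (Fin (2 * n)) :=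
  Relation.EqvGen.setoid (fun i j => a.f i = j ∨ b.f i = j)

/-- The set of circles of `W(a)b`. -/
def Circles (n : ℕ) (a b : Matching n) : Type := Quotient (circleSetoid n a b)

instance (n : ℕ) (a b : Matching n) : Finite (Circles n a b) := Quotient.finite _
instance (n : ℕ) (a b : Matching n) : Fintype (Circles n a b) := Fintype.ofFinite _

/-- The circle through the point `i`. -/
def cmk (n : ℕ) (a b : Matching n) (i : Fin (2 * n)) : Circles n a b :=
  Quotient.mk (circleSetoid n a b) i

/-- A labelling of the circles of `W(a)b` by basis elements of `𝒜`; `false` stands for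
`𝟏` and `true` stands for `X`. -/
def Lab (n : ℕ) (a b : Matching n) : Type := Circles n a b → Bool

/-- `F(W(a)b){n}` : the free abelian group on the set of labellings of the circles of
`W(a)b`; the simple tensor `y₁ ⊗ ⋯ ⊗ y_r` (each `y_i ∈ {𝟏, X}`) corresponds to the
labelling sending each circle to its label. -/
abbrev FM (n : ℕ) (a b : Matching n) : Type := Lab n a b →₀ ℤ

/-- Degree of a basis labelling, including the grading shift `{n}`:
`𝟏` has degree `-1` and `X` has degree `1`. -/
def degLab (n : ℕ) (a b : Matching n) (g : Lab n a b) : ℤ :=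
  (n : ℤ) + ∑ c : Circles n a b, (if g c then (1 : ℤ) else -1)

/-- The homogeneous degree-`d` component of `F(W(a)b){n}`. -/
def FMdeg (n : ℕ) (a b : Matching n) (d : ℤ) : AddSubgroup (FM n a b) where
  carrier := {x | ∀ g ∈ x.support, degLab n a b g = d}
  zero_mem' := by simp
  add_mem' := by
    intro x y hx hy g hg
    rcases Finset.mem_union.mp (Finsupp.support_add hg) with h | h
    · exact hx g h
    · exact hy g h
  neg_mem' := by
    intro x hx g hg
    rw [Finsupp.support_neg] at hg
    exact hx g hg

/-- A circle of `W(a)b` touches the left platform. -/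
def touchesLeft (n k : ℕ) (a b : Matching n) (c : Circles n a b) : Prop :=
  ∃ i, onLeft n k i ∧ cmk n a b i = c

/-- A circle of `W(a)b` touches the right platform. -/
def touchesRight (n k : ℕ) (a b : Matching n) (c : Circles n a b) : Prop :=
  ∃ i, onRight n k i ∧ cmk n a b i = c

/-- Type I circles: disjoint from both platforms. -/
def typeI (n k : ℕ) (a b : Matching n) (c : Circles n a b) : Prop :=
  ¬ touchesLeft n k a b c ∧ ¬ touchesRight n k a b c

/-- Type III circles: meeting one of the platforms at least twice. -/
def typeIII (n k : ℕ) (a b : Matching n) (c : Circles n a b) : Prop :=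
  (∃ i j, i ≠ j ∧ onLeft n k i ∧ onLeft n k j ∧ cmk n a b i = c ∧ cmk n a b j = c) ∨
  (∃ i j, i ≠ j ∧ onRight n k i ∧ onRight n k j ∧ cmk n a b i = c ∧ cmk n a b j = c)

/-- Type II circles: meeting at least one platform, and each platform at most once. -/
def typeII (n k : ℕ) (a b : Matching n) (c : Circles n a b) : Prop :=
  (touchesLeft n k a b c ∨ touchesRight n k a b c) ∧ ¬ typeIII n k a b c

/-- `W(a)b` contains a type III circle. -/
def hasTypeIII (n k : ℕ) (a b : Matching n) : Prop := ∃ c, typeIII n k a b c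

/-- The component `_a(I^{n-k,k})_b` of the ideal `I^{n-k,k}`: all of `F(W(a)b)` if some
circle is of type III, and otherwise the span of the simple tensors carrying the label `X`
on at least one type II circle. -/
def Icomp (n k : ℕ) (a b : Matching n) : AddSubgroup (FM n a b) :=
  if hasTypeIII n k a b then ⊤
  else AddSubgroup.closure
    {x | ∃ (g : Lab n a b) (c : Circles n a b), typeII n k a b c ∧ g c = true ∧
      x = Finsupp.single g 1}

/-- The component `_a(A^{n-k,k})_b = F(W(a)b){n} / _a(I^{n-k,k})_b` of the quotient ring
`A^{n-k,k} = Ã^{n-k,k}/I^{n-k,k}`. -/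
abbrev Acomp (n k : ℕ) (a b : Matching n) : Type := FM n a b ⧸ Icomp n k a b

/-- The labelling with every circle labelled `𝟏`. -/
def labOne (n : ℕ) (a b : Matching n) : Lab n a b := fun _ => false

/-- `1_a = 𝟏^{⊗n} ∈ F(W(a)a){n}`. -/
def oneBasis (n : ℕ) (a : Matching n) : FM n a a := Finsupp.single (labOne n a a) 1

/-- The multiplication of the arc ring `H^n`: the collection of maps
`F(W(a)b){n} ⊗ F(W(b)c){n} → F(W(a)c){n}` induced by the minimal (saddle) cobordisms
`W(a)bW(b)c → W(a)c`, applying the TQFT `F`.  It is biadditive, associative, unital with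
units `1_a`, and degree-preserving. -/
structure HMulData (n : ℕ) where
  mul : ∀ a b c : Matching n, FM n a b → FM n b c → FM n a c
  add_left : ∀ a b c x x' y, mul a b c (x + x') y = mul a b c x y + mul a b c x' y
  add_right : ∀ a b c x y y', mul a b c x (y + y') = mul a b c x y + mul a b c x y'
  assoc : ∀ a b c d x y z, mul a c d (mul a b c x y) z = mul a b d x (mul b c d y z)
  one_mul : ∀ a b x, mul a a b (oneBasis n a) x = x
  mul_one : ∀ a b x, mul a b b x (oneBasis n b) = x
  graded : ∀ a b c (p q : ℤ) x y, x ∈ FMdeg n a b p → y ∈ FMdeg n b c q →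
      mul a b c x y ∈ FMdeg n a c (p + q)


/-- The degree-`d` homogeneous component of `_a(A^{n-k,k})_b`. -/
def AcompDeg (n k : ℕ) (a b : Matching n) (d : ℤ) : AddSubgroup (Acomp n k a b) :=
  (FMdeg n a b d).map (QuotientAddGroup.mk' (Icomp n k a b))

/-- The graded ring `A^{n-k,k} = Ã^{n-k,k}/I^{n-k,k}`, presented abstractly: a ring `R`
together with an additive decomposition into the components `_a(A^{n-k,k})_b`
(`a, b ∈ B^{n-k,k}`), such that multiplication is induced by the minimal-cobordism
multiplication of the arc ring `H^n`: components compose as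
`_a(A)_b ⊗ _b(A)_c → _a(A)_c`, products of components with mismatching inner indices
vanish, the identity is `1 = ∑_a 1_a`, and multiplication respects the grading. -/
structure ArcAlg (n k : ℕ) where
  R : Type
  [ringR : Ring R]
  dec : R ≃+ ((p : BB n k × BB n k) → Acomp n k p.1.1 p.2.1)
  mul_apart : ∀ (a b c d : BB n k) (x : Acomp n k a.1 b.1) (y : Acomp n k c.1 d.1),
      b ≠ c → dec.symm (Pi.single (a, b) x) * dec.symm (Pi.single (c, d) y) = 0
  mul_comp : ∀ (a b c : BB n k) (x : Acomp n k a.1 b.1) (y : Acomp n k b.1 c.1),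
      ∃ z : Acomp n k a.1 c.1,
        dec.symm (Pi.single (a, b) x) * dec.symm (Pi.single (b, c) y) =
          dec.symm (Pi.single (a, c) z)
  one_def : (1 : R) = ∑ a : BB n k,
      dec.symm (Pi.single (a, a)
        (QuotientAddGroup.mk' (Icomp n k a.1 a.1) (oneBasis n a.1)))
  graded_mul : ∀ (a b c : BB n k) (d₁ d₂ : ℤ)
      (x : Acomp n k a.1 b.1) (y : Acomp n k b.1 c.1),
      x ∈ AcompDeg n k a.1 b.1 d₁ → y ∈ AcompDeg n k b.1 c.1 d₂ →
      ∃ z ∈ AcompDeg n k a.1 c.1 (d₁ + d₂),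
        dec.symm (Pi.single (a, b) x) * dec.symm (Pi.single (b, c) y) =
          dec.symm (Pi.single (a, c) z)

attribute [instance] ArcAlg.ringR

/-- The image in `A^{n-k,k}` of a component element. -/
def ArcAlg.incl {n k : ℕ} (A : ArcAlg n k) (a b : BB n k) (x : Acomp n k a.1 b.1) : A.R :=
  A.dec.symm (Pi.single (a, b) x)

/-- The idempotent `1_a ∈ A^{n-k,k}`. -/
def ArcAlg.idem {n k : ℕ} (A : ArcAlg n k) (a : BB n k) : A.R :=
  A.incl a a (QuotientAddGroup.mk' (Icomp n k a.1 a.1) (oneBasis n a.1))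

section Combinatorics

variable {n : ℕ}

lemma Matching.ext' {a b : Matching n} (h : a.f = b.f) : a = b := by
  cases a; cases b; simp only at h; subst h; rfl

/-- the fully nested matching -/
def amax (n : ℕ) : Matching n where
  f := Fin.rev
  invol := fun i => Fin.rev_rev i
  noFix := by
    intro i h
    have h2 : (Fin.rev i : ℕ) = 2 * n - 1 - (i : ℕ) := Fin.val_rev i ▸ by omega
    have := i.isLt
    have h3 : (Fin.rev i : ℕ) = (i : ℕ) := by rw [h]
    omega
  noncross := by
    intro i j hij hj
    have hi2 := Fin.val_rev i
    have hj2 := Fin.val_rev j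
    have := i.isLt; have := j.isLt
    omega

lemma amax_inB (k : ℕ) (hk : k ≤ n) : (amax n).inB n k := by
  constructor
  · intro i hi hfi
    have hi2 := Fin.val_rev i
    have := i.isLt
    have h3 : ((amax n).f i : ℕ) = (Fin.rev i : ℕ) := rfl
    unfold onLeft at *
    omega
  · intro i hi hfi
    have hi2 := Fin.val_rev i
    have := i.isLt
    have h3 : ((amax n).f i : ℕ) = (Fin.rev i : ℕ) := rfl
    unfold onRight at *
    omega

/-- characterization of circle-equality via an ambient equivalence relation -/
lemma cmk_eq_iff (a b : Matching n) (e : Fin (2*n) → Fin (2*n) → Prop)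
    (he : Equivalence e)
    (hsub : ∀ i j, (a.f i = j ∨ b.f i = j) → e i j)
    (hgen : ∀ i j, e i j → Relation.EqvGen (fun i j => a.f i = j ∨ b.f i = j) i j) :
    ∀ i j, (cmk n a b i = cmk n a b j ↔ e i j) := by
  intro i j
  constructor
  · intro h
    have h2 : Relation.EqvGen (fun i j => a.f i = j ∨ b.f i = j) i j :=
      Quotient.exact h
    clear h
    induction h2 with
    | rel x y hxy => exact hsub x y hxy
    | refl x => exact he.refl x
    | symm x y _ ih => exact he.symm ih
    | trans x y z _ _ ih1 ih2 => exact he.trans ih1 ih2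
  · intro h
    exact Quotient.sound (hgen i j h)

lemma cmk_diag (a : Matching n) (i j : Fin (2*n)) :
    cmk n a a i = cmk n a a j ↔ (j = i ∨ a.f i = j) := by
  refine cmk_eq_iff a a (fun i j => j = i ∨ a.f i = j) ⟨fun i => Or.inl rfl, ?_, ?_⟩ ?_ ?_ i j
  · rintro i j (rfl | rfl)
    · exact Or.inl rfl
    · exact Or.inr (a.invol i)
  · rintro i j l (rfl | rfl) h
    · exact h
    · rcases h with rfl | h
      · exact Or.inr rfl
      · exact Or.inl (by rw [← h, a.invol])
  · rintro i j (h | h)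
    · exact Or.inr h
    · exact Or.inr h
  · rintro i j (rfl | h)
    · exact Relation.EqvGen.refl _
    · exact Relation.EqvGen.rel i j (Or.inl h)

lemma no_typeIII_diag {k : ℕ} (a : Matching n) (ha : a.inB n k) :
    ¬ hasTypeIII n k a a := by
  rintro ⟨c, hc⟩
  rcases hc with ⟨i, j, hij, hi, hj, hci, hcj⟩ | ⟨i, j, hij, hi, hj, hci, hcj⟩
  · have := (cmk_diag a i j).mp (hci.trans hcj.symm)
    rcases this with rfl | h
    · exact hij rfl
    · exact ha.1 i hi (h ▸ hj)
  · have := (cmk_diag a i j).mp (hci.trans hcj.symm)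
    rcases this with rfl | h
    · exact hij rfl
    · exact ha.2 i hi (h ▸ hj)

lemma card_circles_diag (a : Matching n) :
    Fintype.card (Circles n a a) = n := by
  have hfib : ∀ c : Circles n a a,
      (Finset.univ.filter (fun i => cmk n a a i = c)).card = 2 := by
    intro c
    induction c using Quotient.ind with
    | _ i =>
      have : (Finset.univ.filter (fun j => cmk n a a j = cmk n a a i)) = {i, a.f i} := by
        ext j
        simp only [Finset.mem_filter, Finset.mem_univ, true_and, Finset.mem_insert,
          Finset.mem_singleton]
        rw [cmk_diag]
        constructor
        · rintro (rfl | h)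
          · exact Or.inl rfl
          · exact Or.inr (by rw [← h, a.invol])
        · rintro (rfl | rfl)
          · exact Or.inl rfl
          · exact Or.inr (a.invol i)
      rw [show Quotient.mk (circleSetoid n a a) i = cmk n a a i from rfl] at *
      rw [this]
      rw [Finset.card_insert_of_notMem (by simp [Ne.symm (a.noFix i)]), Finset.card_singleton]
  have h2n : (Finset.univ : Finset (Fin (2*n))).card =
      ∑ c : Circles n a a, (Finset.univ.filter (fun i => cmk n a a i = c)).card :=
    Finset.card_eq_sum_card_fiberwise (fun i _ => Finset.mem_univ _)
  simp only [hfib, Finset.sum_const, Finset.card_univ, smul_eq_mul, Fintype.card_fin] at h2n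
  omega

end Combinatorics
section DegIcomp

variable {n k : ℕ}

lemma degLab_diag_nonneg (a : Matching n) (g : Lab n a a) :
    0 ≤ degLab n a a g := by
  unfold degLab
  have h1 : -(n:ℤ) ≤ ∑ c : Circles n a a, (if g c then (1:ℤ) else -1) := by
    have : ∑ _c : Circles n a a, (-1 : ℤ) ≤
        ∑ c : Circles n a a, (if g c then (1:ℤ) else -1) := by
      apply Finset.sum_le_sum
      intro c _
      by_cases h : g c <;> simp [h]
    simpa [card_circles_diag a] using this
  omega

lemma degLab_diag_le (a : Matching n) (g : Lab n a a) :
    degLab n a a g ≤ 2 * n := by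
  unfold degLab
  have h1 : ∑ c : Circles n a a, (if g c then (1:ℤ) else -1) ≤ (n:ℤ) := by
    have : ∑ c : Circles n a a, (if g c then (1:ℤ) else -1) ≤
        ∑ _c : Circles n a a, (1 : ℤ) := by
      apply Finset.sum_le_sum
      intro c _
      by_cases h : g c <;> simp [h]
    simpa [card_circles_diag a] using this
  omega

lemma degLab_diag_zero (a : Matching n) (g : Lab n a a) (h : degLab n a a g = 0) :
    g = labOne n a a := by
  unfold degLab at h
  have h2 : ∑ c : Circles n a a, ((if g c then (1:ℤ) else -1) + 1) = 0 := by
    rw [Finset.sum_add_distrib]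
    simp only [Finset.sum_const, Finset.card_univ, card_circles_diag a, nsmul_eq_mul, mul_one]
    omega
  have h3 : ∀ c ∈ (Finset.univ : Finset (Circles n a a)),
      ((if g c then (1:ℤ) else -1) + 1) = 0 := by
    intro c hc
    have := (Finset.sum_eq_zero_iff_of_nonneg (by
      intro c _
      by_cases h : g c <;> simp [h])).mp h2 c hc
    exact this
  funext c
  have := h3 c (Finset.mem_univ c)
  by_cases hgc : g c
  · simp [hgc] at this
  · simp only [labOne]
    simpa using hgc

lemma degLab_labOne_diag (a : Matching n) : degLab n a a (labOne n a a) = 0 := by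
  unfold degLab
  have h1 : ∑ c : Circles n a a, (if labOne n a a c then (1:ℤ) else -1)
      = ∑ _c : Circles n a a, (-1 : ℤ) := by
    apply Finset.sum_congr rfl
    intro c _
    rfl
  rw [h1]
  simp [card_circles_diag a]

/-- the subgroup of elements supported on labellings carrying `X` on a type II circle -/
def Sbad (n k : ℕ) (a b : Matching n) : AddSubgroup (FM n a b) where
  carrier := {x | ∀ g ∈ x.support, ∃ c, typeII n k a b c ∧ g c = true}
  zero_mem' := by simp
  add_mem' := by
    intro x y hx hy g hg
    rcases Finset.mem_union.mp (Finsupp.support_add hg) with h | h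
    · exact hx g h
    · exact hy g h
  neg_mem' := by
    intro x hx g hg
    rw [Finsupp.support_neg] at hg
    exact hx g hg

lemma Icomp_le_Sbad (a b : Matching n) (h : ¬ hasTypeIII n k a b) :
    Icomp n k a b ≤ Sbad n k a b := by
  unfold Icomp
  rw [if_neg h]
  apply AddSubgroup.closure_le (Sbad n k a b) |>.mpr
  rintro x ⟨g, c, hc, hgc, rfl⟩
  intro g' hg'
  rcases Finset.mem_singleton.mp (Finsupp.support_single_subset hg') with rfl
  exact ⟨c, hc, hgc⟩

/-- evaluation at the all-`𝟏` labelling descends to the quotient -/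
def epsHom (n k : ℕ) (a b : Matching n) (h : ¬ hasTypeIII n k a b) :
    Acomp n k a b →+ ℤ :=
  QuotientAddGroup.lift (Icomp n k a b) (Finsupp.applyAddHom (labOne n a b)) (by
    intro f hf
    have hf2 := Icomp_le_Sbad a b h hf
    show f (labOne n a b) = 0
    by_contra hne
    have hmem : labOne n a b ∈ f.support := Finsupp.mem_support_iff.mpr hne
    obtain ⟨c, _, hc⟩ := hf2 _ hmem
    simp [labOne] at hc)

lemma epsHom_mk (a b : Matching n) (h : ¬ hasTypeIII n k a b) (f : FM n a b) :
    epsHom n k a b h (QuotientAddGroup.mk' (Icomp n k a b) f) = f (labOne n a b) := rfl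

lemma mk_oneBasis_ne_zero (a : Matching n) (h : ¬ hasTypeIII n k a a) :
    QuotientAddGroup.mk' (Icomp n k a a) (oneBasis n a) ≠ 0 := by
  intro h0
  have := epsHom_mk a a h (oneBasis n a)
  rw [h0] at this
  simp only [map_zero] at this
  unfold oneBasis at this
  rw [Finsupp.single_eq_same] at this
  exact one_ne_zero this.symm

lemma mk_single_labOne_ne_zero (a b : Matching n) (h : ¬ hasTypeIII n k a b) :
    QuotientAddGroup.mk' (Icomp n k a b) (Finsupp.single (labOne n a b) (1:ℤ)) ≠ 0 := by
  intro h0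
  have h1 : Finsupp.single (labOne n a b) (1:ℤ) ∈ Icomp n k a b :=
    (QuotientAddGroup.eq_zero_iff _).mp h0
  have h2 := Icomp_le_Sbad a b h h1
  have hmem : labOne n a b ∈ (Finsupp.single (labOne n a b) (1:ℤ)).support :=
    Finsupp.mem_support_iff.mpr (by simp)
  obtain ⟨c, _, hc⟩ := h2 _ hmem
  simp [labOne] at hc

end DegIcomp
section Move

variable {n : ℕ}

/-- Context for an elementary move at an occurrence of the pattern `)(` at `t, t+1`. -/
structure MoveCtx (n : ℕ) where
  a : Matching n
  t : Fin (2*n)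
  t1 : Fin (2*n)
  h1 : (t1:ℕ) = (t:ℕ)+1
  hu : (a.f t : ℕ) < (t:ℕ)
  hv : (t1:ℕ) < (a.f t1 : ℕ)

namespace MoveCtx

variable (M : MoveCtx n)

def u : Fin (2*n) := M.a.f M.t
def v : Fin (2*n) := M.a.f M.t1

lemma hu' : (M.u:ℕ) < (M.t:ℕ) := M.hu
lemma hv' : (M.t1:ℕ) < (M.v:ℕ) := M.hv

lemma ord : (M.u:ℕ) < (M.t:ℕ) ∧ (M.t:ℕ) < (M.t1:ℕ) ∧ (M.t1:ℕ) < (M.v:ℕ) :=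
  ⟨M.hu, by have := M.h1; omega, M.hv⟩

lemma af_u : M.a.f M.u = M.t := M.a.invol M.t
lemma af_v : M.a.f M.v = M.t1 := M.a.invol M.t1

/-- the new matching function -/
def bf : Fin (2*n) → Fin (2*n) :=
  fun i => if i = M.t then M.t1 else if i = M.t1 then M.t
    else if i = M.u then M.v else if i = M.v then M.u else M.a.f i

lemma ne_tt1 : M.t ≠ M.t1 := fun h => by have := M.ord; rw [h] at this; omega
lemma ne_tu : M.t ≠ M.u := fun h => by have := M.ord; rw [h] at this; omega
lemma ne_tv : M.t ≠ M.v := fun h => by have := M.ord; rw [h] at this; omega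
lemma ne_t1u : M.t1 ≠ M.u := fun h => by have := M.ord; rw [h] at this; omega
lemma ne_t1v : M.t1 ≠ M.v := fun h => by have := M.ord; rw [h] at this; omega
lemma ne_uv : M.u ≠ M.v := fun h => by have := M.ord; rw [h] at this; omega

lemma bf_t : M.bf M.t = M.t1 := by simp [bf]
lemma bf_t1 : M.bf M.t1 = M.t := by simp [bf, M.ne_tt1.symm]
lemma bf_u : M.bf M.u = M.v := by simp [bf, M.ne_tu.symm, M.ne_t1u.symm]
lemma bf_v : M.bf M.v = M.u := by simp [bf, M.ne_tv.symm, M.ne_t1v.symm, M.ne_uv.symm]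

/-- i is one of the four special points -/
def inS (i : Fin (2*n)) : Prop := i = M.t ∨ i = M.t1 ∨ i = M.u ∨ i = M.v

lemma bf_other {i : Fin (2*n)} (h : ¬ M.inS i) : M.bf i = M.a.f i := by
  unfold inS at h
  push_neg at h
  simp [bf, h.1, h.2.1, h.2.2.1, h.2.2.2]

lemma af_ne_of_notS {i : Fin (2*n)} (h : ¬ M.inS i) :
    M.a.f i ≠ M.t ∧ M.a.f i ≠ M.t1 ∧ M.a.f i ≠ M.u ∧ M.a.f i ≠ M.v := by
  unfold inS at h
  push_neg at h
  refine ⟨?_, ?_, ?_, ?_⟩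
  · intro he
    apply h.2.2.1
    have h2 := congrArg M.a.f he
    rw [M.a.invol] at h2
    exact h2
  · intro he
    apply h.2.2.2
    have h2 := congrArg M.a.f he
    rw [M.a.invol] at h2
    exact h2
  · intro he
    apply h.1
    have h2 := congrArg M.a.f he
    rw [M.a.invol, M.af_u] at h2
    exact h2
  · intro he
    apply h.2.1
    have h2 := congrArg M.a.f he
    rw [M.a.invol, M.af_v] at h2
    exact h2

lemma bf_invol : Function.Involutive M.bf := by
  intro i
  by_cases h1 : i = M.t
  · rw [h1, M.bf_t, M.bf_t1]
  by_cases h2 : i = M.t1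
  · rw [h2, M.bf_t1, M.bf_t]
  by_cases h3 : i = M.u
  · rw [h3, M.bf_u, M.bf_v]
  by_cases h4 : i = M.v
  · rw [h4, M.bf_v, M.bf_u]
  · have hS : ¬ M.inS i := by unfold inS; tauto
    rw [M.bf_other hS]
    have hne := M.af_ne_of_notS hS
    have hS2 : ¬ M.inS (M.a.f i) := by unfold inS; tauto
    rw [M.bf_other hS2, M.a.invol]

lemma bf_noFix : ∀ i, M.bf i ≠ i := by
  intro i
  by_cases h1 : i = M.t
  · rw [h1, M.bf_t]; exact M.ne_tt1.symm
  by_cases h2 : i = M.t1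
  · rw [h2, M.bf_t1]; exact M.ne_tt1
  by_cases h3 : i = M.u
  · rw [h3, M.bf_u]; exact (M.ne_uv).symm
  by_cases h4 : i = M.v
  · rw [h4, M.bf_v]; exact M.ne_uv
  · have hS : ¬ M.inS i := by unfold inS; tauto
    rw [M.bf_other hS]
    exact M.a.noFix i

lemma F1 {w : Fin (2*n)} (h1 : (M.u:ℕ) < w) (h2 : (w:ℕ) < M.t) :
    (M.u:ℕ) < (M.a.f w : ℕ) ∧ (M.a.f w : ℕ) < M.t := by
  have := M.a.noncross M.u w h1 (by rw [M.af_u]; exact h2)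
  rwa [M.af_u] at this

lemma F2 {w : Fin (2*n)} (h1 : (M.t1:ℕ) < w) (h2 : (w:ℕ) < M.v) :
    (M.t1:ℕ) < (M.a.f w : ℕ) ∧ (M.a.f w : ℕ) < M.v :=
  M.a.noncross M.t1 w h1 h2

lemma val_ne {i j : Fin (2*n)} (h : i ≠ j) : (i:ℕ) ≠ (j:ℕ) :=
  fun he => h (Fin.ext he)

lemma bf_noncross : ∀ i j : Fin (2*n), (i:ℕ) < (j:ℕ) → (j:ℕ) < (M.bf i : ℕ) →
    (i:ℕ) < (M.bf j : ℕ) ∧ (M.bf j : ℕ) < (M.bf i : ℕ) := by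
  have hord := M.ord
  have hh1 := M.h1
  intro i j hij hj
  by_cases hit : i = M.t
  · subst hit; rw [M.bf_t] at hj ⊢; omega
  by_cases hit1 : i = M.t1
  · subst hit1; rw [M.bf_t1] at hj ⊢; omega
  by_cases hiv : i = M.v
  · subst hiv; rw [M.bf_v] at hj ⊢; omega
  by_cases hiu : i = M.u
  · -- i = u, u < j < v
    subst hiu
    rw [M.bf_u] at hj ⊢
    by_cases hjt : j = M.t
    · subst hjt; rw [M.bf_t]; omega
    by_cases hjt1 : j = M.t1
    · subst hjt1; rw [M.bf_t1]; omega
    by_cases hjv : j = M.v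
    · subst hjv; omega
    by_cases hju : j = M.u
    · subst hju; omega
    · have hS : ¬ M.inS j := by unfold inS; tauto
      rw [M.bf_other hS]
      have hjt' := val_ne hjt
      have hjt1' := val_ne hjt1
      rcases lt_or_gt_of_ne hjt' with hlt | hgt
      · have := M.F1 hij hlt; omega
      · have h2 : (M.t1:ℕ) < j := by omega
        have := M.F2 h2 hj; omega
  · -- i outside S
    have hiS : ¬ M.inS i := by unfold inS; tauto
    rw [M.bf_other hiS] at hj ⊢
    have hne := M.af_ne_of_notS hiS
    by_cases hjt : j = M.t
    · subst hjt
      rw [M.bf_t]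
      have hz : (M.a.f i : ℕ) ≠ (M.t1:ℕ) := val_ne hne.2.1
      omega
    by_cases hjt1 : j = M.t1
    · subst hjt1
      rw [M.bf_t1]
      have hi : (i:ℕ) ≠ (M.t:ℕ) := val_ne hit
      omega
    by_cases hju : j = M.u
    · subst hju
      rw [M.bf_u]
      -- i < u < a.f i ; get t ∈ (i, a.f i), then t1, then v
      have s1 := M.a.noncross i M.u hij hj
      rw [M.af_u] at s1
      have hz1 : (M.a.f i : ℕ) ≠ (M.t1:ℕ) := val_ne hne.2.1
      have s2 : (i:ℕ) < (M.v:ℕ) ∧ (M.v:ℕ) < (M.a.f i : ℕ) :=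
        M.a.noncross i M.t1 (by omega) (by omega)
      omega
    by_cases hjv : j = M.v
    · subst hjv
      rw [M.bf_v]
      have s1 := M.a.noncross i M.v hij hj
      rw [M.af_v] at s1
      have hi : (i:ℕ) ≠ (M.t:ℕ) := val_ne hit
      have s2 : (i:ℕ) < (M.u:ℕ) ∧ (M.u:ℕ) < (M.a.f i : ℕ) :=
        M.a.noncross i M.t (by omega) (by omega)
      omega
    · have hS : ¬ M.inS j := by unfold inS; tauto
      rw [M.bf_other hS]
      exact M.a.noncross i j hij hj

/-- the matching after the move -/
def b : Matching n where
  f := M.bf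
  invol := M.bf_invol
  noFix := M.bf_noFix
  noncross := M.bf_noncross

variable {k : ℕ}

section Platforms

variable (hB : M.a.inB n k)

include hB

lemma t_nL : ¬ onLeft n k M.t := by
  intro h
  have := hB.1 M.t h
  unfold onLeft at *
  have := M.hu
  omega

lemma t1_nL : ¬ onLeft n k M.t1 := by
  intro h
  apply M.t_nL hB
  unfold onLeft at *
  have := M.ord
  omega

lemma v_nL : ¬ onLeft n k M.v := by
  intro h
  apply M.t1_nL hB
  unfold onLeft at *
  have := M.ord
  omega

lemma t1_nR : ¬ onRight n k M.t1 := by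
  intro h
  have := hB.2 M.t1 h
  unfold onRight at *
  have := M.hv
  omega

lemma t_nR : ¬ onRight n k M.t := by
  intro h
  apply M.t1_nR hB
  unfold onRight at *
  have := M.ord
  omega

lemma u_nR : ¬ onRight n k M.u := by
  intro h
  apply M.t_nR hB
  unfold onRight at *
  have := M.ord
  omega

lemma b_inB : M.b.inB n k := by
  constructor
  · intro i hi
    by_cases h1 : i = M.t
    · exact absurd (h1 ▸ hi) (M.t_nL hB)
    by_cases h2 : i = M.t1
    · exact absurd (h2 ▸ hi) (M.t1_nL hB)
    by_cases h3 : i = M.u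
    · subst h3
      show ¬ onLeft n k (M.bf M.u)
      rw [M.bf_u]
      exact M.v_nL hB
    by_cases h4 : i = M.v
    · exact absurd (h4 ▸ hi) (M.v_nL hB)
    · have hS : ¬ M.inS i := by unfold inS; tauto
      show ¬ onLeft n k (M.bf i)
      rw [M.bf_other hS]
      exact hB.1 i hi
  · intro i hi
    by_cases h1 : i = M.t
    · exact absurd (h1 ▸ hi) (M.t_nR hB)
    by_cases h2 : i = M.t1
    · exact absurd (h2 ▸ hi) (M.t1_nR hB)
    by_cases h3 : i = M.u
    · exact absurd (h3 ▸ hi) (M.u_nR hB)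
    by_cases h4 : i = M.v
    · subst h4
      show ¬ onRight n k (M.bf M.v)
      rw [M.bf_v]
      exact M.u_nR hB
    · have hS : ¬ M.inS i := by unfold inS; tauto
      show ¬ onRight n k (M.bf i)
      rw [M.bf_other hS]
      exact hB.2 i hi

end Platforms

lemma inS_af {i : Fin (2*n)} (h : M.inS i) : M.inS (M.a.f i) := by
  rcases h with rfl | rfl | rfl | rfl
  · exact Or.inr (Or.inr (Or.inl rfl))
  · exact Or.inr (Or.inr (Or.inr rfl))
  · rw [M.af_u]; exact Or.inl rfl
  · rw [M.af_v]; exact Or.inr (Or.inl rfl)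

lemma inS_bf {i : Fin (2*n)} (h : M.inS i) : M.inS (M.bf i) := by
  rcases h with rfl | rfl | rfl | rfl
  · rw [M.bf_t]; exact Or.inr (Or.inl rfl)
  · rw [M.bf_t1]; exact Or.inl rfl
  · rw [M.bf_u]; exact Or.inr (Or.inr (Or.inr rfl))
  · rw [M.bf_v]; exact Or.inr (Or.inr (Or.inl rfl))

/-- the equivalence describing circles of `W(a)b` for a move pair -/
def eRel (i j : Fin (2*n)) : Prop := i = j ∨ M.a.f i = j ∨ (M.inS i ∧ M.inS j)

lemma eRel_equiv : Equivalence M.eRel := by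
  constructor
  · intro i; exact Or.inl rfl
  · rintro i j (rfl | h | ⟨h1, h2⟩)
    · exact Or.inl rfl
    · exact Or.inr (Or.inl (by rw [← h, M.a.invol]))
    · exact Or.inr (Or.inr ⟨h2, h1⟩)
  · rintro i j l (rfl | h | ⟨h1, h2⟩)
    · exact id
    · rintro (rfl | h' | ⟨h1', h2'⟩)
      · exact Or.inr (Or.inl h)
      · exact Or.inl (by rw [← h', ← h, M.a.invol])
      · refine Or.inr (Or.inr ⟨?_, h2'⟩)
        have := M.inS_af h1'
        rwa [← h, M.a.invol] at this
    · rintro (rfl | h' | ⟨h1', h2'⟩)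
      · exact Or.inr (Or.inr ⟨h1, h2⟩)
      · exact Or.inr (Or.inr ⟨h1, h' ▸ M.inS_af h2⟩)
      · exact Or.inr (Or.inr ⟨h1, h2'⟩)

lemma cmk_move (i j : Fin (2*n)) :
    cmk n M.a M.b i = cmk n M.a M.b j ↔ M.eRel i j := by
  refine cmk_eq_iff M.a M.b M.eRel M.eRel_equiv ?_ ?_ i j
  · rintro i j (h | h)
    · exact Or.inr (Or.inl h)
    · by_cases hS : M.inS i
      · exact Or.inr (Or.inr ⟨hS, h ▸ M.inS_bf hS⟩)
      · have : M.b.f i = M.a.f i := M.bf_other hS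
        rw [this] at h
        exact Or.inr (Or.inl h)
  · intro i j h
    set r : Fin (2*n) → Fin (2*n) → Prop := fun i j => M.a.f i = j ∨ M.b.f i = j with hr
    have htt1 : Relation.EqvGen r M.t M.t1 :=
      Relation.EqvGen.rel _ _ (Or.inr M.bf_t)
    have htu : Relation.EqvGen r M.t M.u :=
      Relation.EqvGen.rel _ _ (Or.inl rfl)
    have ht1v : Relation.EqvGen r M.t1 M.v :=
      Relation.EqvGen.rel _ _ (Or.inl rfl)
    have hAll : ∀ w, M.inS w → Relation.EqvGen r M.t w := by
      rintro w (rfl | rfl | rfl | rfl)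
      · exact Relation.EqvGen.refl _
      · exact htt1
      · exact htu
      · exact Relation.EqvGen.trans _ _ _ htt1 ht1v
    rcases h with rfl | h | ⟨h1, h2⟩
    · exact Relation.EqvGen.refl _
    · exact Relation.EqvGen.rel _ _ (Or.inl h)
    · exact Relation.EqvGen.trans _ _ _
        (Relation.EqvGen.symm _ _ (hAll i h1)) (hAll j h2)

lemma no_typeIII_move (hB : M.a.inB n k) : ¬ hasTypeIII n k M.a M.b := by
  rintro ⟨c, hc⟩
  rcases hc with ⟨i, j, hij, hi, hj, hci, hcj⟩ | ⟨i, j, hij, hi, hj, hci, hcj⟩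
  · rcases (M.cmk_move i j).mp (hci.trans hcj.symm) with rfl | h | ⟨h1, h2⟩
    · exact hij rfl
    · exact hB.1 i hi (h ▸ hj)
    · have hL : ∀ w, M.inS w → onLeft n k w → w = M.u := by
        rintro w (rfl | rfl | rfl | rfl) hw
        · exact absurd hw (M.t_nL hB)
        · exact absurd hw (M.t1_nL hB)
        · rfl
        · exact absurd hw (M.v_nL hB)
      exact hij ((hL i h1 hi).trans (hL j h2 hj).symm)
  · rcases (M.cmk_move i j).mp (hci.trans hcj.symm) with rfl | h | ⟨h1, h2⟩
    · exact hij rfl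
    · exact hB.2 i hi (h ▸ hj)
    · have hR : ∀ w, M.inS w → onRight n k w → w = M.v := by
        rintro w (rfl | rfl | rfl | rfl) hw
        · exact absurd hw (M.t_nR hB)
        · exact absurd hw (M.t1_nR hB)
        · exact absurd hw (M.u_nR hB)
        · rfl
      exact hij ((hR i h1 hi).trans (hR j h2 hj).symm)

end MoveCtx

/-- the potential function: sum of the left endpoints of all arcs -/
def Phi (a : Matching n) : ℕ :=
  ∑ i : Fin (2*n), (if (i:ℕ) < (a.f i : ℕ) then (i:ℕ) else 0)

lemma MoveCtx.phi_lt (M : MoveCtx n) : Phi M.b < Phi M.a := by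
  have hord := M.ord
  have hhu := M.hu
  have hhv := M.hv
  have hh1 := M.h1
  have key : ∀ i : Fin (2*n),
      (if (i:ℕ) < (M.b.f i : ℕ) then (i:ℕ) else 0) + (if i = M.t1 then (M.t1:ℕ) else 0)
      = (if (i:ℕ) < (M.a.f i : ℕ) then (i:ℕ) else 0) + (if i = M.t then (M.t:ℕ) else 0) := by
    intro i
    by_cases h1 : i = M.t
    · subst h1
      rw [if_neg M.ne_tt1, if_pos rfl]
      show (if (M.t:ℕ) < (M.bf M.t : ℕ) then (M.t:ℕ) else 0) + 0 = _
      rw [M.bf_t, if_pos (by omega), if_neg (by omega)]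
      omega
    by_cases h2 : i = M.t1
    · subst h2
      rw [if_pos rfl, if_neg (M.ne_tt1.symm)]
      show (if (M.t1:ℕ) < (M.bf M.t1 : ℕ) then (M.t1:ℕ) else 0) + (M.t1:ℕ) = _
      rw [M.bf_t1, if_neg (by omega), if_pos (by omega)]
      omega
    by_cases h3 : i = M.u
    · subst h3
      rw [if_neg h2, if_neg h1]
      show (if (M.u:ℕ) < (M.bf M.u : ℕ) then (M.u:ℕ) else 0) + 0 = _
      rw [M.bf_u, if_pos (by omega)]
      rw [show M.a.f M.u = M.t from M.af_u, if_pos (by omega)]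
    by_cases h4 : i = M.v
    · subst h4
      rw [if_neg h2, if_neg h1]
      show (if (M.v:ℕ) < (M.bf M.v : ℕ) then (M.v:ℕ) else 0) + 0 = _
      rw [M.bf_v, if_neg (by omega)]
      rw [show M.a.f M.v = M.t1 from M.af_v, if_neg (by omega)]
    · have hS : ¬ M.inS i := by unfold inS; tauto
      rw [if_neg h2, if_neg h1]
      show (if (i:ℕ) < (M.bf i : ℕ) then (i:ℕ) else 0) + 0 = _
      rw [M.bf_other hS]
  have hsum := Finset.sum_congr rfl (fun i (_ : i ∈ Finset.univ) => key i)
  rw [Finset.sum_add_distrib, Finset.sum_add_distrib] at hsum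
  rw [Finset.sum_ite_eq' Finset.univ M.t1 (fun _ => (M.t1:ℕ)),
    Finset.sum_ite_eq' Finset.univ M.t (fun _ => (M.t:ℕ))] at hsum
  simp only [Finset.mem_univ, if_pos] at hsum
  unfold Phi
  omega

end Move
section Sorted

variable {n : ℕ}

/-- If a matching has no `)(` pattern, it is the fully nested matching. -/
lemma no_pattern_eq_amax (a : Matching n)
    (h : ∀ M : MoveCtx n, M.a ≠ a) : a = amax n := by
  -- first: no pattern
  have hnp : ∀ t t1 : Fin (2*n), (t1:ℕ) = (t:ℕ)+1 →
      (a.f t : ℕ) < (t:ℕ) → ¬ ((t1:ℕ) < (a.f t1 : ℕ)) := by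
    intro t t1 ht1 hft hlt
    exact h ⟨a, t, t1, ht1, hft, hlt⟩ rfl
  -- the set of "opening" points
  set P : Fin (2*n) → Prop := fun i => (i:ℕ) < (a.f i : ℕ) with hP
  -- not-P is upward closed
  have hup : ∀ i j : Fin (2*n), (i:ℕ) ≤ (j:ℕ) → ¬ P i → ¬ P j := by
    intro i j hij hPi
    have key : ∀ m : ℕ, ∀ j : Fin (2*n), (j:ℕ) = (i:ℕ) + m → ¬ P j := by
      intro m
      induction m with
      | zero =>
        intro j hj
        have : j = i := Fin.ext (by omega)
        rwa [this]
      | succ m ih =>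
        intro j hj
        have hjm : (i:ℕ) + m < 2*n := by have := j.isLt; omega
        set jm : Fin (2*n) := ⟨(i:ℕ) + m, hjm⟩ with hjm'
        have hjmval : (jm:ℕ) = (i:ℕ) + m := rfl
        have hPjm : ¬ P jm := ih jm rfl
        have hfjm : (a.f jm : ℕ) < (jm:ℕ) := by
          have hne := a.noFix jm
          have : (a.f jm : ℕ) ≠ (jm:ℕ) := fun he => hne (Fin.ext he)
          simp only [hP] at hPjm
          omega
        have := hnp jm j (by omega) hfjm
        simp only [hP]
        omega
    exact key ((j:ℕ) - (i:ℕ)) j (by omega)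
  -- P is exactly the lower half
  have hPcard : (Finset.univ.filter P).card = n := by
    have himg : Finset.image a.f (Finset.univ.filter P) = Finset.univ.filter (fun i => ¬ P i) := by
      ext j
      simp only [Finset.mem_image, Finset.mem_filter, Finset.mem_univ, true_and]
      constructor
      · rintro ⟨i, hi, rfl⟩
        simp only [hP] at hi ⊢
        rw [a.invol]
        omega
      · intro hj
        refine ⟨a.f j, ?_, a.invol j⟩
        simp only [hP] at hj ⊢
        rw [a.invol]
        have hne : (a.f j : ℕ) ≠ (j:ℕ) := fun he => a.noFix j (Fin.ext he)
        omega
    have hcard : (Finset.univ.filter P).card = (Finset.univ.filter (fun i => ¬ P i)).card := by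
      rw [← himg, Finset.card_image_of_injective _ a.invol.injective]
    have htot : (Finset.univ.filter P).card + (Finset.univ.filter (fun i => ¬ P i)).card
        = 2*n := by
      rw [Finset.card_filter_add_card_filter_not]
      simp
    omega
  have hPiff : ∀ i : Fin (2*n), P i ↔ (i:ℕ) < n := by
    intro i
    constructor
    · intro hPi
      by_contra hge
      -- all j ≤ i are in P, giving more than n elements
      have hsub : ∀ j : Fin (2*n), (j:ℕ) ≤ (i:ℕ) → P j := by
        intro j hj
        by_contra hPj
        exact hup j i hj hPj hPi
      have hsub2 : (Finset.univ.filter (fun j : Fin (2*n) => (j:ℕ) ≤ (i:ℕ)))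
          ⊆ Finset.univ.filter P := by
        intro j hj
        simp only [Finset.mem_filter, Finset.mem_univ, true_and] at hj ⊢
        exact hsub j hj
      have hc1 : (Finset.univ.filter (fun j : Fin (2*n) => (j:ℕ) ≤ (i:ℕ))).card = (i:ℕ)+1 := by
        rw [show (Finset.univ.filter (fun j : Fin (2*n) => (j:ℕ) ≤ (i:ℕ))) = Finset.Iic i by
          ext j
          simp only [Finset.mem_filter, Finset.mem_univ, true_and, Finset.mem_Iic, Fin.le_def]]
        rw [Fin.card_Iic]
      have := Finset.card_le_card hsub2
      rw [hc1, hPcard] at this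
      omega
    · intro hlt
      by_contra hPi
      have hsub : ∀ j : Fin (2*n), P j → (j:ℕ) < (i:ℕ) := by
        intro j hj
        by_contra hge
        exact hup i j (by omega) hPi hj
      have hsub2 : Finset.univ.filter P
          ⊆ Finset.univ.filter (fun j : Fin (2*n) => (j:ℕ) < (i:ℕ)) := by
        intro j hj
        simp only [Finset.mem_filter, Finset.mem_univ, true_and] at hj ⊢
        exact hsub j hj
      have hc1 : (Finset.univ.filter (fun j : Fin (2*n) => (j:ℕ) < (i:ℕ))).card = (i:ℕ) := by
        rw [show (Finset.univ.filter (fun j : Fin (2*n) => (j:ℕ) < (i:ℕ))) = Finset.Iio i by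
          ext j
          simp only [Finset.mem_filter, Finset.mem_univ, true_and, Finset.mem_Iio, Fin.lt_def]]
        rw [Fin.card_Iio]
      have := Finset.card_le_card hsub2
      rw [hc1, hPcard] at this
      omega
  -- f i ≥ n for i < n
  have hge : ∀ i : Fin (2*n), (i:ℕ) < n → n ≤ (a.f i : ℕ) := by
    intro i hi
    have h1 : P i := (hPiff i).mpr hi
    have h2 : ¬ P (a.f i) := by
      simp only [hP] at h1 ⊢
      rw [a.invol]
      omega
    have := (hPiff (a.f i)).not.mp h2
    omega
  -- antitone on the lower half
  have hanti : ∀ i j : Fin (2*n), (i:ℕ) < (j:ℕ) → (j:ℕ) < n →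
      (a.f j : ℕ) < (a.f i : ℕ) := by
    intro i j hij hj
    have := a.noncross i j hij (by have := hge i (by omega); omega)
    exact this.2
  -- upper bound by induction
  have hub : ∀ m : ℕ, ∀ (hm : m < n), (a.f ⟨m, by omega⟩ : ℕ) ≤ 2*n - 1 - m := by
    intro m
    induction m with
    | zero =>
      intro hm
      have := (a.f ⟨0, by omega⟩).isLt
      omega
    | succ m ih =>
      intro hm
      have h1 := ih (by omega)
      have h2 := hanti ⟨m, by omega⟩ ⟨m+1, by omega⟩ (by simp) (by simpa)
      omega
  -- lower bound by induction from the top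
  have hlb : ∀ d : ℕ, ∀ (hd : d < n), n + d ≤ (a.f ⟨n - 1 - d, by omega⟩ : ℕ) := by
    intro d
    induction d with
    | zero =>
      intro hd
      have := hge ⟨n - 1 - 0, by omega⟩ (by simp; omega)
      simpa using this
    | succ d ih =>
      intro hd
      have h1 := ih (by omega)
      have h2 := hanti ⟨n - 1 - (d+1), by omega⟩ ⟨n - 1 - d, by omega⟩ (by simp; omega)
        (by simp; omega)
      omega
  -- exact values on the lower half
  have hexact : ∀ i : Fin (2*n), (i:ℕ) < n → (a.f i : ℕ) = 2*n - 1 - (i:ℕ) := by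
    intro i hi
    have h1 := hub (i:ℕ) hi
    have h2 := hlb (n - 1 - (i:ℕ)) (by omega)
    have hieq : (⟨(i:ℕ), by omega⟩ : Fin (2*n)) = i := Fin.ext rfl
    rw [hieq] at h1
    have hieq2 : (⟨n - 1 - (n - 1 - (i:ℕ)), by omega⟩ : Fin (2*n)) = i := Fin.ext (by simp; omega)
    rw [hieq2] at h2
    omega
  -- conclude
  apply Matching.ext'
  funext i
  apply Fin.ext
  have hrev : ((amax n).f i : ℕ) = 2*n - 1 - (i:ℕ) := by
    show (Fin.rev i : ℕ) = _
    rw [Fin.val_rev]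
    omega
  rw [hrev]
  by_cases hi : (i:ℕ) < n
  · exact hexact i hi
  · have hj : 2*n - 1 - (i:ℕ) < n := by have := i.isLt; omega
    set j : Fin (2*n) := ⟨2*n - 1 - (i:ℕ), by have := i.isLt; omega⟩ with hj'
    have h1 := hexact j hj
    have h2 : a.f j = i := Fin.ext (by rw [h1]; simp only [hj']; have := i.isLt; omega)
    have h3 : a.f i = j := by rw [← h2, a.invol]
    rw [h3]

end Sorted
section DiagClassify

variable {n k : ℕ}

/-- elements supported in degrees `≥ r` -/
def FMlow (n : ℕ) (a b : Matching n) (r : ℤ) : AddSubgroup (FM n a b) where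
  carrier := {x | ∀ g ∈ x.support, r ≤ degLab n a b g}
  zero_mem' := by simp
  add_mem' := by
    intro x y hx hy g hg
    rcases Finset.mem_union.mp (Finsupp.support_add hg) with h | h
    · exact hx g h
    · exact hy g h
  neg_mem' := by
    intro x hx g hg
    rw [Finsupp.support_neg] at hg
    exact hx g hg

/-- the filtration of the quotient -/
def Tlow (n k : ℕ) (a b : Matching n) (r : ℤ) : AddSubgroup (Acomp n k a b) :=
  (FMlow n a b r).map (QuotientAddGroup.mk' (Icomp n k a b))

lemma AcompDeg_le_Tlow (a b : Matching n) {r d : ℤ} (h : r ≤ d) :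
    AcompDeg n k a b d ≤ Tlow n k a b r := by
  apply AddSubgroup.map_mono
  intro f hf g hg
  rw [hf g hg]
  exact h

lemma decomp_mk (a : Matching n) (f : FM n a a) :
    QuotientAddGroup.mk' (Icomp n k a a) f
      = ∑ d ∈ Finset.Icc (0:ℤ) (2*n),
          QuotientAddGroup.mk' (Icomp n k a a)
            (f.filter (fun g => degLab n a a g = d)) := by
  rw [← map_sum]
  congr 1
  ext g
  rw [Finsupp.finset_sum_apply]
  have : ∀ d ∈ Finset.Icc (0:ℤ) (2*n),
      (f.filter (fun g' => degLab n a a g' = d)) g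
        = if degLab n a a g = d then f g else 0 := by
    intro d _
    rw [Finsupp.filter_apply]
  rw [Finset.sum_congr rfl this, Finset.sum_ite_eq]
  rw [if_pos]
  rw [Finset.mem_Icc]
  exact ⟨degLab_diag_nonneg a g, degLab_diag_le a g⟩

lemma filter_mem_FMdeg (a : Matching n) (f : FM n a a) (d : ℤ) :
    f.filter (fun g => degLab n a a g = d) ∈ FMdeg n a a d := by
  intro g hg
  rw [Finsupp.support_filter, Finset.mem_filter] at hg
  exact hg.2

lemma Tlow_big_eq_bot (a : Matching n) {r : ℤ} (hr : 2*(n:ℤ) < r) (x : Acomp n k a a)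
    (hx : x ∈ Tlow n k a a r) : x = 0 := by
  obtain ⟨f, hf, rfl⟩ := hx
  have : f = 0 := by
    ext g
    by_contra hne
    have hg : g ∈ f.support := Finsupp.mem_support_iff.mpr hne
    have := hf g hg
    have := degLab_diag_le a g
    omega
  rw [this, map_zero]

lemma eps_Tlow_zero (a : Matching n) (hIII : ¬ hasTypeIII n k a a) {r : ℤ} (hr : 1 ≤ r)
    (x : Acomp n k a a) (hx : x ∈ Tlow n k a a r) : epsHom n k a a hIII x = 0 := by
  obtain ⟨f, hf, rfl⟩ := hx
  rw [epsHom_mk]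
  by_contra hne
  have hg : labOne n a a ∈ f.support := Finsupp.mem_support_iff.mpr hne
  have := hf _ hg
  rw [degLab_labOne_diag] at this
  omega

/-- Classification of idempotents in the diagonal corner. -/
lemma diag_idem_classify (a : Matching n) (hB : a.inB n k)
    (F : Acomp n k a a →+ Acomp n k a a →+ Acomp n k a a)
    (hFone_l : ∀ x, F (QuotientAddGroup.mk' (Icomp n k a a) (oneBasis n a)) x = x)
    (hFone_r : ∀ x, F x (QuotientAddGroup.mk' (Icomp n k a a) (oneBasis n a)) = x)
    (hFgr : ∀ (d₁ d₂ : ℤ) x y, x ∈ AcompDeg n k a a d₁ → y ∈ AcompDeg n k a a d₂ →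
      F x y ∈ AcompDeg n k a a (d₁ + d₂))
    (u : Acomp n k a a) (hu : F u u = u) :
    u = 0 ∨ u = QuotientAddGroup.mk' (Icomp n k a a) (oneBasis n a) := by
  have hIII : ¬ hasTypeIII n k a a := no_typeIII_diag a hB
  set mk := QuotientAddGroup.mk' (Icomp n k a a) with hmk
  set oneM := mk (oneBasis n a) with honeM
  set ε := epsHom n k a a hIII with hε
  -- F respects the filtration
  have hFT : ∀ (r s : ℤ) (x y : Acomp n k a a), x ∈ Tlow n k a a r → y ∈ Tlow n k a a s →
      F x y ∈ Tlow n k a a (r + s) := by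
    intro r s x y hx hy
    obtain ⟨f1, hf1, rfl⟩ := hx
    obtain ⟨f2, hf2, rfl⟩ := hy
    rw [decomp_mk a f1, decomp_mk a f2, map_sum]
    apply AddSubgroup.sum_mem
    intro e _
    rw [map_sum, AddMonoidHom.finset_sum_apply]
    apply AddSubgroup.sum_mem
    intro d _
    by_cases hd : r ≤ d
    · by_cases he : s ≤ e
      · exact AcompDeg_le_Tlow a a (by omega)
          (hFgr d e _ _ ⟨_, filter_mem_FMdeg a f1 d, rfl⟩ ⟨_, filter_mem_FMdeg a f2 e, rfl⟩)
      · have : f2.filter (fun g => degLab n a a g = e) = 0 := by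
          ext g
          rw [Finsupp.filter_apply]
          split_ifs with h
          · by_contra hne
            have := hf2 g (Finsupp.mem_support_iff.mpr hne)
            omega
          · rfl
        rw [this, map_zero, map_zero]
        exact zero_mem _
    · have : f1.filter (fun g => degLab n a a g = d) = 0 := by
        ext g
        rw [Finsupp.filter_apply]
        split_ifs with h
        · by_contra hne
          have := hf1 g (Finsupp.mem_support_iff.mpr hne)
          omega
        · rfl
      rw [this, map_zero, map_zero, AddMonoidHom.zero_apply]
      exact zero_mem _
  -- pick a representative and its degree-zero coefficient
  obtain ⟨f, rfl⟩ := QuotientAddGroup.mk'_surjective (Icomp n k a a) u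
  set c : ℤ := f (labOne n a a) with hc
  have hfilter0 : f.filter (fun g => degLab n a a g = 0)
      = Finsupp.single (labOne n a a) c := by
    ext g
    rw [Finsupp.filter_apply, Finsupp.single_apply]
    by_cases hg : degLab n a a g = 0
    · have := degLab_diag_zero a g hg
      subst this
      rw [if_pos hg, if_pos rfl]
    · rw [if_neg hg, if_neg (by
        intro he
        apply hg
        rw [← he, degLab_labOne_diag])]
  set y : Acomp n k a a := mk f - mk (Finsupp.single (labOne n a a) c) with hy
  have hudecomp : mk f = mk (Finsupp.single (labOne n a a) c) + y := by
    rw [hy]; abel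
  have hyT : y ∈ Tlow n k a a 1 := by
    have h1 : mk f = mk (Finsupp.single (labOne n a a) c)
        + ∑ d ∈ Finset.Icc (1:ℤ) (2*n), mk (f.filter (fun g => degLab n a a g = d)) := by
      rw [decomp_mk a f]
      have hins : Finset.Icc (0:ℤ) (2*n) = insert 0 (Finset.Icc (1:ℤ) (2*n)) := by
        ext d
        simp only [Finset.mem_Icc, Finset.mem_insert]
        omega
      rw [hins, Finset.sum_insert (by simp), hfilter0]
    have h2 : y = ∑ d ∈ Finset.Icc (1:ℤ) (2*n), mk (f.filter (fun g => degLab n a a g = d)) := by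
      rw [hy, h1]; abel
    rw [h2]
    apply AddSubgroup.sum_mem
    intro d hd
    rw [Finset.mem_Icc] at hd
    exact AcompDeg_le_Tlow a a (by omega : (1:ℤ) ≤ d) ⟨_, filter_mem_FMdeg a f d, rfl⟩
  have huT0 : mk f ∈ Tlow n k a a 0 :=
    ⟨f, (fun g _ => degLab_diag_nonneg a g), rfl⟩
  have hεu : ε (mk f) = c := epsHom_mk a a hIII f
  have hsingle : mk (Finsupp.single (labOne n a a) c) = c • oneM := by
    rw [honeM, ← map_zsmul]
    congr 1
    rw [oneBasis, Finsupp.smul_single]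
    norm_num
  -- c is idempotent
  have hexp1 : F (mk f) (mk f) = c • mk f + F y (mk f) := by
    have h1 : F (mk f) = c • F oneM + F y := by
      conv_lhs => rw [hudecomp]
      rw [hsingle, map_add, map_zsmul]
    rw [h1, AddMonoidHom.add_apply]
    show c • F oneM (mk f) + _ = _
    rw [hFone_l]
  have hεFu : ε (F (mk f) (mk f)) = c * c := by
    rw [hexp1, map_add, map_zsmul, hεu]
    have hmem : F y (mk f) ∈ Tlow n k a a 1 := by
      have := hFT 1 0 y (mk f) hyT huT0
      simpa using this
    rw [eps_Tlow_zero a hIII (le_refl 1) _ hmem]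
    simp
  have hcc : c * c = c := by rw [← hεFu, hu, hεu]
  have hc01 : c = 0 ∨ c = 1 := by
    have h2 : c * (c - 1) = 0 := by linear_combination hcc
    rcases mul_eq_zero.mp h2 with h | h
    · exact Or.inl h
    · exact Or.inr (by omega)
  have hindgen : ∀ (hFyy : F y y = y ∨ F y y = -y), y = 0 := by
    intro hFyy
    have hind : ∀ m : ℕ, y ∈ Tlow n k a a (1 + (m:ℤ)) := by
      intro m
      induction m with
      | zero => simpa using hyT
      | succ m ih =>
        have h := hFT 1 (1 + (m:ℤ)) y y hyT ih
        have hcast : (1:ℤ) + ((m+1 : ℕ):ℤ) = 1 + (1 + (m:ℤ)) := by push_cast; ring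
        rw [hcast]
        rcases hFyy with h' | h'
        · rw [← h']; exact h
        · have : y = -(F y y) := by rw [h']; simp
          rw [this]
          exact neg_mem h
    exact Tlow_big_eq_bot a (by push_cast; omega) y (hind (2*n))
  rcases hc01 with hc0 | hc1
  · -- c = 0, so u = y and F y y = y
    have hy0 : mk f = y := by
      rw [hudecomp, hc0]
      simp only [Finsupp.single_zero, map_zero]
      abel
    have hFyy : F y y = y := by rw [← hy0]; exact hu
    have := hindgen (Or.inl hFyy)
    left
    rw [hy0, this]
  · -- c = 1, so u = oneM + y and F y y = -y
    have hu1 : mk f = oneM + y := by rw [hudecomp, hsingle, hc1, one_smul]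
    have hexp : F (mk f) (mk f) = oneM + y + (y + F y y) := by
      have h1 : F (mk f) = F oneM + F y := by
        conv_lhs => rw [hu1]
        rw [map_add]
      rw [h1, AddMonoidHom.add_apply, hFone_l, hu1, map_add, hFone_r]
    have heq : oneM + y + (y + F y y) = oneM + y := by
      rw [← hexp, hu, hu1]
    have hFyy : F y y = -y := by
      have heq' : (oneM + y) + (y + F y y) = (oneM + y) + 0 := by
        rw [add_zero]
        exact heq
      have h0 : y + F y y = 0 := add_left_cancel heq'
      exact eq_neg_of_add_eq_zero_right h0
    have hy0 := hindgen (Or.inr hFyy)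
    right
    rw [hu1, hy0, add_zero]

end DiagClassify
section Main

variable {n k : ℕ} (A : ArcAlg n k)

lemma incl_def (a b : BB n k) (x : Acomp n k a.1 b.1) :
    A.incl a b x = A.dec.symm (Pi.single (a,b) x) := rfl

lemma incl_zero (a b : BB n k) : A.incl a b 0 = 0 := by
  rw [incl_def, Pi.single_zero, map_zero]

lemma dec_incl (a b : BB n k) (x : Acomp n k a.1 b.1) :
    A.dec (A.incl a b x) = Pi.single (a,b) x := by
  rw [incl_def, AddEquiv.apply_symm_apply]

lemma incl_inj (a b : BB n k) : Function.Injective (A.incl a b) := by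
  intro x y h
  have h2 := congrArg A.dec h
  rw [dec_incl, dec_incl] at h2
  have h3 := congrFun h2 (a,b)
  rwa [Pi.single_eq_same, Pi.single_eq_same] at h3

lemma incl_add (a b : BB n k) (x y : Acomp n k a.1 b.1) :
    A.incl a b (x + y) = A.incl a b x + A.incl a b y := by
  rw [incl_def, incl_def, incl_def, ← map_add]
  congr 1
  rw [Pi.single_add]

lemma x_decomp (x : A.R) :
    x = ∑ p : BB n k × BB n k, A.incl p.1 p.2 (A.dec x p) := by
  have h1 : A.dec x = ∑ p, Pi.single p (A.dec x p) := (Finset.univ_sum_single (A.dec x)).symm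
  calc x = A.dec.symm (A.dec x) := (AddEquiv.symm_apply_apply _ _).symm
    _ = A.dec.symm (∑ p, Pi.single p (A.dec x p)) := by rw [← h1]
    _ = ∑ p, A.dec.symm (Pi.single p (A.dec x p)) := map_sum _ _ _
    _ = ∑ p : BB n k × BB n k, A.incl p.1 p.2 (A.dec x p) := rfl

def oneA (a : BB n k) : Acomp n k a.1 a.1 :=
  QuotientAddGroup.mk' (Icomp n k a.1 a.1) (oneBasis n a.1)

lemma one_eq : (1 : A.R) = ∑ a : BB n k, A.incl a a (oneA a) := A.one_def

lemma idem_mul (a b : BB n k) (x : Acomp n k a.1 b.1) :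
    A.incl a a (oneA a) * A.incl a b x = A.incl a b x := by
  have hsum : ∑ c : BB n k, A.incl c c (oneA c) * A.incl a b x
      = A.incl a a (oneA a) * A.incl a b x := by
    apply Finset.sum_eq_single a
    · intro c _ hca
      exact A.mul_apart c c a b _ x hca
    · intro habs
      exact absurd (Finset.mem_univ a) habs
  calc A.incl a a (oneA a) * A.incl a b x
      = ∑ c : BB n k, A.incl c c (oneA c) * A.incl a b x := hsum.symm
    _ = (∑ c : BB n k, A.incl c c (oneA c)) * A.incl a b x := (Finset.sum_mul _ _ _).symm
    _ = 1 * A.incl a b x := by rw [← one_eq A]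
    _ = A.incl a b x := one_mul _

lemma mul_idem (a b : BB n k) (x : Acomp n k a.1 b.1) :
    A.incl a b x * A.incl b b (oneA b) = A.incl a b x := by
  have hsum : ∑ c : BB n k, A.incl a b x * A.incl c c (oneA c)
      = A.incl a b x * A.incl b b (oneA b) := by
    apply Finset.sum_eq_single b
    · intro c _ hcb
      exact A.mul_apart a b c c x _ (fun h => hcb h.symm)
    · intro habs
      exact absurd (Finset.mem_univ b) habs
  calc A.incl a b x * A.incl b b (oneA b)
      = ∑ c : BB n k, A.incl a b x * A.incl c c (oneA c) := hsum.symm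
    _ = A.incl a b x * (∑ c : BB n k, A.incl c c (oneA c)) := (Finset.mul_sum _ _ _).symm
    _ = A.incl a b x * 1 := by rw [← one_eq A]
    _ = A.incl a b x := mul_one _

lemma dec_row_eval (a b0 : BB n k) (w : ∀ b : BB n k, Acomp n k a.1 b.1) :
    A.dec (∑ b : BB n k, A.incl a b (w b)) (a, b0) = w b0 := by
  rw [map_sum, Finset.sum_apply]
  have hsum : ∀ b : BB n k, b ≠ b0 → A.dec (A.incl a b (w b)) (a, b0) = 0 := by
    intro b hb
    rw [dec_incl]
    exact Pi.single_eq_of_ne (fun hh => hb ((Prod.ext_iff.mp hh).2.symm)) _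
  rw [Finset.sum_eq_single b0 (fun b _ hb => hsum b hb)
    (fun habs => absurd (Finset.mem_univ b0) habs)]
  rw [dec_incl]
  exact Pi.single_eq_same _ _

lemma dec_col_eval0 (a b0 : BB n k) (h : a ≠ b0) (w : ∀ c : BB n k, Acomp n k c.1 a.1) :
    A.dec (∑ c : BB n k, A.incl c a (w c)) (a, b0) = 0 := by
  rw [map_sum, Finset.sum_apply]
  apply Finset.sum_eq_zero
  intro c _
  rw [dec_incl]
  exact Pi.single_eq_of_ne (fun hh => h ((Prod.ext_iff.mp hh).2.symm)) _

lemma dec_diag_eval (a0 : BB n k) (w : ∀ c : BB n k, Acomp n k c.1 c.1) :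
    A.dec (∑ c : BB n k, A.incl c c (w c)) (a0, a0) = w a0 := by
  rw [map_sum, Finset.sum_apply]
  have hsum : ∀ c : BB n k, c ≠ a0 → A.dec (A.incl c c (w c)) (a0, a0) = 0 := by
    intro c hc
    rw [dec_incl]
    exact Pi.single_eq_of_ne (fun hh => hc ((Prod.ext_iff.mp hh).1.symm)) _
  rw [Finset.sum_eq_single a0 (fun c _ hc => hsum c hc)
    (fun habs => absurd (Finset.mem_univ a0) habs)]
  rw [dec_incl]
  exact Pi.single_eq_same _ _

end Main
/-- The ring `A^{n-k,k}` is indecomposable: its only central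
idempotents are `0` and `1`. -/
theorem A_indecomposable (n k : ℕ) (hk : k ≤ n) (A : ArcAlg n k) :
    ∀ x : A.R, IsIdempotentElem x → x ∈ Set.center A.R → x = 0 ∨ x = 1 := by
  intro x hidem hcen
  have hxx : x * x = x := hidem
  have hcomm : ∀ g : A.R, g * x = x * g := Semigroup.mem_center_iff.mp hcen
  -- off-diagonal components vanish
  have hoff : ∀ p : BB n k × BB n k, p.1 ≠ p.2 → A.dec x p = 0 := by
    rintro ⟨a, b⟩ hab
    have h1 : A.incl a a (oneA a) * x = ∑ b' : BB n k, A.incl a b' (A.dec x (a, b')) := by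
      conv_lhs => rw [x_decomp A x]
      rw [Finset.mul_sum, Fintype.sum_prod_type]
      have hz : ∀ c : BB n k, c ≠ a →
          ∑ b' : BB n k, A.incl a a (oneA a) * A.incl c b' (A.dec x (c, b')) = 0 := by
        intro c hca
        apply Finset.sum_eq_zero
        intro b' _
        exact A.mul_apart a a c b' _ _ (fun h => hca h.symm)
      rw [Finset.sum_eq_single a (fun c _ hca => hz c hca)
        (fun habs => absurd (Finset.mem_univ a) habs)]
      apply Finset.sum_congr rfl
      intro b' _
      exact idem_mul A a b' _
    have h2 : x * A.incl a a (oneA a) = ∑ c : BB n k, A.incl c a (A.dec x (c, a)) := by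
      conv_lhs => rw [x_decomp A x]
      rw [Finset.sum_mul, Fintype.sum_prod_type]
      apply Finset.sum_congr rfl
      intro c _
      have hz : ∀ b' : BB n k, b' ≠ a →
          A.incl c b' (A.dec x (c, b')) * A.incl a a (oneA a) = 0 := by
        intro b' hb'
        exact A.mul_apart c b' a a _ _ hb'
      rw [Finset.sum_eq_single a (fun b' _ hb' => hz b' hb')
        (fun habs => absurd (Finset.mem_univ a) habs)]
      exact mul_idem A c a _
    have h3 := hcomm (A.incl a a (oneA a))
    rw [h1, h2] at h3
    have h4 := congrArg (fun z => A.dec z (a, b)) h3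
    simp only at h4
    rw [dec_row_eval, dec_col_eval0 A a b hab] at h4
    exact h4
  -- x is a sum of diagonal components
  have hxdiag : x = ∑ a : BB n k, A.incl a a (A.dec x (a, a)) := by
    conv_lhs => rw [x_decomp A x]
    rw [Fintype.sum_prod_type]
    apply Finset.sum_congr rfl
    intro a _
    have hz : ∀ b : BB n k, b ≠ a → A.incl a b (A.dec x (a, b)) = 0 := by
      intro b hba
      rw [hoff (a, b) (fun h => hba h.symm), incl_zero]
    rw [Finset.sum_eq_single a (fun b _ hb => hz b hb)
      (fun habs => absurd (Finset.mem_univ a) habs)]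
  -- the corner multiplication
  set G : (a : BB n k) → Acomp n k a.1 a.1 → Acomp n k a.1 a.1 → Acomp n k a.1 a.1 :=
    fun a v w => A.dec (A.incl a a v * A.incl a a w) (a, a) with hG
  have hGmul : ∀ (a : BB n k) v w, A.incl a a (G a v w) = A.incl a a v * A.incl a a w := by
    intro a v w
    obtain ⟨z, hz⟩ := A.mul_comp a a a v w
    have hz' : A.incl a a v * A.incl a a w = A.incl a a z := hz
    rw [hG]
    simp only
    rw [hz', dec_incl, Pi.single_eq_same]
  -- diagonal entries are idempotent
  have hdiagidem : ∀ a : BB n k, G a (A.dec x (a, a)) (A.dec x (a, a)) = A.dec x (a, a) := by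
    intro a
    have h1 : x * x = ∑ c : BB n k, A.incl c c (G c (A.dec x (c, c)) (A.dec x (c, c))) := by
      conv_lhs => rw [hxdiag]
      rw [Finset.sum_mul]
      apply Finset.sum_congr rfl
      intro c _
      rw [Finset.mul_sum]
      have hz : ∀ e : BB n k, e ≠ c →
          A.incl c c (A.dec x (c, c)) * A.incl e e (A.dec x (e, e)) = 0 := by
        intro e hec
        exact A.mul_apart c c e e _ _ (fun h => hec h.symm)
      rw [Finset.sum_eq_single c (fun e _ he => hz e he)
        (fun habs => absurd (Finset.mem_univ c) habs)]
      exact (hGmul c _ _).symm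
    have h3 : ∑ c : BB n k, A.incl c c (G c (A.dec x (c, c)) (A.dec x (c, c)))
        = ∑ c : BB n k, A.incl c c (A.dec x (c, c)) := by
      rw [← h1, hxx]
      exact hxdiag
    have h4 := congrArg (fun z => A.dec z (a, a)) h3
    simp only at h4
    rw [dec_diag_eval, dec_diag_eval] at h4
    exact h4
  -- classification of the diagonal entries
  have hclass : ∀ a : BB n k, A.dec x (a, a) = 0 ∨ A.dec x (a, a) = oneA a := by
    intro a
    have hGadd_l : ∀ v v' w, G a (v + v') w = G a v w + G a v' w := by
      intro v v' w
      rw [hG]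
      simp only
      rw [incl_add, add_mul, map_add, Pi.add_apply]
    have hGadd_r : ∀ v w w', G a v (w + w') = G a v w + G a v w' := by
      intro v w w'
      rw [hG]
      simp only
      rw [incl_add, mul_add, map_add, Pi.add_apply]
    set F : Acomp n k a.1 a.1 →+ Acomp n k a.1 a.1 →+ Acomp n k a.1 a.1 :=
      AddMonoidHom.mk' (fun v => AddMonoidHom.mk' (fun w => G a v w) (hGadd_r v))
        (fun v v' => AddMonoidHom.ext (fun w => hGadd_l v v' w)) with hF
    have hFone_l : ∀ w, F (oneA a) w = w := by
      intro w
      show G a (oneA a) w = w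
      rw [hG]
      simp only
      rw [idem_mul A a a w, dec_incl, Pi.single_eq_same]
    have hFone_r : ∀ w, F w (oneA a) = w := by
      intro w
      show G a w (oneA a) = w
      rw [hG]
      simp only
      rw [mul_idem A a a w, dec_incl, Pi.single_eq_same]
    have hFgr : ∀ (d₁ d₂ : ℤ) v w, v ∈ AcompDeg n k a.1 a.1 d₁ → w ∈ AcompDeg n k a.1 a.1 d₂ →
        F v w ∈ AcompDeg n k a.1 a.1 (d₁ + d₂) := by
      intro d₁ d₂ v w hv hw
      obtain ⟨z, hzmem, hzeq⟩ := A.graded_mul a a a d₁ d₂ v w hv hw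
      have hzeq' : A.incl a a v * A.incl a a w = A.incl a a z := hzeq
      have : F v w = z := by
        show G a v w = z
        rw [hG]
        simp only
        rw [hzeq', dec_incl, Pi.single_eq_same]
      rw [this]
      exact hzmem
    exact diag_idem_classify a.1 a.2 F hFone_l hFone_r hFgr _ (hdiagidem a)
  have hone_ne : ∀ a : BB n k, oneA a ≠ 0 :=
    fun a => mk_oneBasis_ne_zero a.1 (no_typeIII_diag a.1 a.2)
  -- adjacent matchings have equal coefficients
  have hedge : ∀ a b : BB n k, ¬ hasTypeIII n k a.1 b.1 →
      (A.dec x (a, a) = oneA a ↔ A.dec x (b, b) = oneA b) := by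
    intro a b hIII
    set wbar : Acomp n k a.1 b.1 :=
      QuotientAddGroup.mk' (Icomp n k a.1 b.1) (Finsupp.single (labOne n a.1 b.1) (1:ℤ))
      with hwbar
    have hwne : wbar ≠ 0 := mk_single_labOne_ne_zero a.1 b.1 hIII
    set w : A.R := A.incl a b wbar with hw
    have hLx : x * w = A.incl a a (A.dec x (a, a)) * w := by
      conv_lhs => rw [hxdiag]
      rw [Finset.sum_mul]
      have hz : ∀ c : BB n k, c ≠ a → A.incl c c (A.dec x (c, c)) * w = 0 := by
        intro c hca
        exact A.mul_apart c c a b _ _ hca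
      rw [Finset.sum_eq_single a (fun c _ hc => hz c hc)
        (fun habs => absurd (Finset.mem_univ a) habs)]
    have hRx : w * x = w * A.incl b b (A.dec x (b, b)) := by
      conv_lhs => rw [hxdiag]
      rw [Finset.mul_sum]
      have hz : ∀ c : BB n k, c ≠ b → w * A.incl c c (A.dec x (c, c)) = 0 := by
        intro c hcb
        exact A.mul_apart a b c c _ _ (fun h => hcb h.symm)
      rw [Finset.sum_eq_single b (fun c _ hc => hz c hc)
        (fun habs => absurd (Finset.mem_univ b) habs)]
    have key : ∀ (hA1 : A.dec x (a, a) = oneA a) (hB0 : A.dec x (b, b) = 0), False := by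
      intro hA1 hB0
      have h1 : x * w = w := by
        rw [hLx, hA1]
        exact idem_mul A a b wbar
      have h2 : w * x = 0 := by
        rw [hRx, hB0, incl_zero, mul_zero]
      have h3 := hcomm w
      rw [h1, h2] at h3
      apply hwne
      apply incl_inj A a b
      rw [incl_zero]
      exact h3.symm
    have key2 : ∀ (hA0 : A.dec x (a, a) = 0) (hB1 : A.dec x (b, b) = oneA b), False := by
      intro hA0 hB1
      have h1 : x * w = 0 := by
        rw [hLx, hA0, incl_zero, zero_mul]
      have h2 : w * x = w := by
        rw [hRx, hB1]
        exact mul_idem A a b wbar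
      have h3 := hcomm w
      rw [h1, h2] at h3
      apply hwne
      apply incl_inj A a b
      rw [incl_zero]
      exact h3
    constructor
    · intro ha
      rcases hclass b with hb | hb
      · exact absurd (key ha hb) (fun h => h)
      · exact hb
    · intro hb
      rcases hclass a with ha | ha
      · exact absurd (key2 ha hb) (fun h => h)
      · exact ha
  -- connectivity: everything is linked to the maximal matching
  set amaxB : BB n k := ⟨amax n, amax_inB k hk⟩ with hamaxB
  have hconn : ∀ m : ℕ, ∀ aB : BB n k, Phi aB.1 ≤ m →
      (A.dec x (aB, aB) = oneA aB ↔ A.dec x (amaxB, amaxB) = oneA amaxB) := by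
    intro m
    induction m with
    | zero =>
      intro aB hPhi
      by_cases hpat : ∃ M : MoveCtx n, M.a = aB.1
      · obtain ⟨M, hM⟩ := hpat
        exfalso
        have := M.phi_lt
        rw [hM] at this
        omega
      · have h1 : aB.1 = amax n := no_pattern_eq_amax aB.1 (fun M hM => hpat ⟨M, hM⟩)
        have h2 : aB = amaxB := Subtype.ext (by rw [h1])
        rw [h2]
    | succ m ih =>
      intro aB hPhi
      by_cases hpat : ∃ M : MoveCtx n, M.a = aB.1
      · obtain ⟨M, hM⟩ := hpat
        have hBa : M.a.inB n k := by rw [hM]; exact aB.2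
        set bB : BB n k := ⟨M.b, M.b_inB hBa⟩ with hbB
        have hIII : ¬ hasTypeIII n k aB.1 bB.1 := by
          have := M.no_typeIII_move hBa
          rwa [hM] at this
        have hlt : Phi bB.1 ≤ m := by
          have h5 := M.phi_lt
          rw [hM] at h5
          have hq : Phi bB.1 = Phi M.b := rfl
          omega
        rw [hedge aB bB hIII]
        exact ih bB hlt
      · have h1 : aB.1 = amax n := no_pattern_eq_amax aB.1 (fun M hM => hpat ⟨M, hM⟩)
        have h2 : aB = amaxB := Subtype.ext (by rw [h1])
        rw [h2]
  -- conclude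
  rcases hclass amaxB with h0 | h1
  · left
    have hall : ∀ a : BB n k, A.dec x (a, a) = 0 := by
      intro a
      rcases hclass a with h | h
      · exact h
      · exfalso
        have h2 := (hconn (Phi a.1) a (le_refl _)).mp h
        rw [h2] at h0
        exact hone_ne amaxB h0
    rw [hxdiag]
    apply Finset.sum_eq_zero
    intro a _
    rw [hall a, incl_zero]
  · right
    have hall : ∀ a : BB n k, A.dec x (a, a) = oneA a := by
      intro a
      rcases hclass a with h | h
      · exfalso
        have h2 := (hconn (Phi a.1) a (le_refl _)).mpr h1
        rw [h] at h2
        exact hone_ne a h2.symm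
      · exact h
    rw [hxdiag, A.one_def]
    apply Finset.sum_congr rfl
    intro a _
    rw [hall a]
    rfl
end
end

section
/- There is a partition B^{n−k,k} = B₁ ⊔ B₂ (determined by the parity of the number of elementary changes connecting two matchings) such that, setting e₁ = Σ_{a∈B₁} 1_a and e₂ = 1 − e₁ = Σ_{a∈B₂} 1_a, every homogeneous element of e_i A^{n−k,k} e_i has even degree (i = 1,2) and every homogeneous element of e_i A^{n−k,k} e_j for i ≠ j has odd degree. -/
noncomputable section
attribute [local instance 0] Classical.propDecidable

/-- Two crossingless matchings differ by an elementary change: two arcs joining points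
`i₁ < i₂ < i₃ < i₄` as `(i₁i₂), (i₃i₄)` are replaced by `(i₁i₄), (i₂i₃)` or vice versa,
all other arcs being unchanged. -/
def ElemChange (n : ℕ) (a b : Matching n) : Prop :=
  ∃ i₁ i₂ i₃ i₄ : Fin (2 * n),
    (i₁ : ℕ) < (i₂ : ℕ) ∧ (i₂ : ℕ) < (i₃ : ℕ) ∧ (i₃ : ℕ) < (i₄ : ℕ) ∧
    (∀ j, j ∉ ({i₁, i₂, i₃, i₄} : Set (Fin (2 * n))) → a.f j = b.f j) ∧
    ((a.f i₁ = i₂ ∧ a.f i₃ = i₄ ∧ b.f i₁ = i₄ ∧ b.f i₂ = i₃) ∨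
     (a.f i₁ = i₄ ∧ a.f i₂ = i₃ ∧ b.f i₁ = i₂ ∧ b.f i₃ = i₄))

namespace StmtAux

lemma even_card_of_invol (F : ℕ → ℕ) (s : Finset ℕ)
    (hmem : ∀ y ∈ s, F y ∈ s) (hinv : ∀ y ∈ s, F (F y) = y)
    (hne : ∀ y ∈ s, F y ≠ y) : Even s.card := by
  classical
  have h1 : (s.filter (fun y => y < F y)).card = (s.filter (fun y => F y < y)).card := by
    apply Finset.card_bij (fun y _ => F y)
    · intro y hy
      simp only [Finset.mem_filter] at hy ⊢
      exact ⟨hmem y hy.1, by rw [hinv y hy.1]; exact hy.2⟩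
    · intro y hy y' hy' h
      simp only [Finset.mem_filter] at hy hy'
      calc y = F (F y) := (hinv y hy.1).symm
        _ = F (F y') := by rw [h]
        _ = y' := hinv y' hy'.1
    · intro y hy
      simp only [Finset.mem_filter] at hy
      refine ⟨F y, ?_, hinv y hy.1⟩
      simp only [Finset.mem_filter]
      exact ⟨hmem y hy.1, by rw [hinv y hy.1]; exact hy.2⟩
  have h2 : (s.filter (fun y => y < F y)).card
      + (s.filter (fun y => ¬ y < F y)).card = s.card :=
    Finset.card_filter_add_card_filter_not _
  have h3 : s.filter (fun y => ¬ y < F y) = s.filter (fun y => F y < y) := by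
    ext x
    simp only [Finset.mem_filter]
    constructor
    · rintro ⟨hs, h⟩; exact ⟨hs, by have := hne x hs; omega⟩
    · rintro ⟨hs, h⟩; exact ⟨hs, by omega⟩
  refine ⟨(s.filter (fun y => y < F y)).card, ?_⟩
  rw [h3] at h2
  omega

def mf {n : ℕ} (m : Matching n) (x : ℕ) : ℕ :=
  if h : x < 2*n then (m.f ⟨x, h⟩ : ℕ) else x

lemma mf_eq {n : ℕ} (m : Matching n) {x : ℕ} (h : x < 2*n) :
    mf m x = (m.f ⟨x, h⟩ : ℕ) := dif_pos h

lemma mf_lt {n : ℕ} (m : Matching n) {x : ℕ} (h : x < 2*n) : mf m x < 2*n := by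
  rw [mf_eq m h]; exact (m.f ⟨x, h⟩).2

lemma mf_invol {n : ℕ} (m : Matching n) {x : ℕ} (h : x < 2*n) :
    mf m (mf m x) = x := by
  have h2 := mf_lt m h
  have key : (⟨mf m x, h2⟩ : Fin (2*n)) = m.f ⟨x, h⟩ := Fin.ext (mf_eq m h)
  rw [mf_eq m h2, key, m.invol ⟨x, h⟩]

lemma mf_ne {n : ℕ} (m : Matching n) {x : ℕ} (h : x < 2*n) : mf m x ≠ x := by
  rw [mf_eq m h]
  intro hc
  exact m.noFix ⟨x, h⟩ (Fin.ext hc)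

lemma mf_inj {n : ℕ} (m : Matching n) {x y : ℕ} (hx : x < 2*n) (hy : y < 2*n)
    (h : mf m x = mf m y) : x = y := by
  have := mf_invol m hx
  rw [h, mf_invol m hy] at this
  omega

lemma mf_nc {n : ℕ} (m : Matching n) {x y : ℕ} (hy : y < 2*n) (h1 : x < y)
    (h2 : y < mf m x) : x < mf m y ∧ mf m y < mf m x := by
  have hx : x < 2*n := lt_trans h1 hy
  rw [mf_eq m hx] at h2 ⊢
  rw [mf_eq m hy]
  exact m.noncross ⟨x, hx⟩ ⟨y, hy⟩ h1 h2

def ofNat (n : ℕ) (F : ℕ → ℕ) (hlt : ∀ x, x < 2*n → F x < 2*n)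
    (hinv : ∀ x, x < 2*n → F (F x) = x) (hne : ∀ x, x < 2*n → F x ≠ x)
    (hnc : ∀ x y, y < 2*n → x < y → y < F x → x < F y ∧ F y < F x) : Matching n where
  f := fun j => ⟨F j, hlt j j.2⟩
  invol := fun j => Fin.ext (by simpa using hinv j j.2)
  noFix := fun j h => hne j j.2 (congrArg Fin.val h)
  noncross := fun i j h1 h2 => hnc i j j.2 h1 h2

lemma mf_ofNat (n : ℕ) (F : ℕ → ℕ) (hlt : ∀ x, x < 2*n → F x < 2*n)
    (hinv : ∀ x, x < 2*n → F (F x) = x) (hne : ∀ x, x < 2*n → F x ≠ x)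
    (hnc : ∀ x y, y < 2*n → x < y → y < F x → x < F y ∧ F y < F x)
    {x : ℕ} (h : x < 2*n) : mf (ofNat n F hlt hinv hne hnc) x = F x := by
  rw [mf_eq _ h]; rfl

lemma evenGap {n : ℕ} (m : Matching n) {x : ℕ} (hx : x < 2*n) (h : x < mf m x) :
    Even (mf m x - x - 1) := by
  classical
  have hcard : (Finset.Ico (x+1) (mf m x)).card = mf m x - x - 1 := by
    rw [Nat.card_Ico]; omega
  rw [← hcard]
  apply even_card_of_invol (mf m)
  · intro y hy
    rw [Finset.mem_Ico] at hy ⊢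
    have := mf_nc m (lt_trans hy.2 (mf_lt m hx)) (by omega : x < y) hy.2
    omega
  · intro y hy
    rw [Finset.mem_Ico] at hy
    exact mf_invol m (lt_trans hy.2 (mf_lt m hx))
  · intro y hy
    rw [Finset.mem_Ico] at hy
    exact mf_ne m (lt_trans hy.2 (mf_lt m hx))

lemma exists_adj {n : ℕ} (b : Matching (n+1)) :
    ∃ I : ℕ, I + 1 < 2*(n+1) ∧ mf b I = I + 1 := by
  classical
  have h0 : (0:ℕ) < 2*(n+1) := by omega
  set T : Finset ℕ := (Finset.range (2*(n+1))).filter (fun x => x < mf b x) with hT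
  have h0T : 0 ∈ T := by
    simp only [hT, Finset.mem_filter, Finset.mem_range]
    have := mf_ne b h0
    omega
  obtain ⟨I, hIT, hmin⟩ := T.exists_min_image (fun x => mf b x - x) ⟨0, h0T⟩
  simp only [hT, Finset.mem_filter, Finset.mem_range] at hIT
  obtain ⟨hIlt, hIarc⟩ := hIT
  have hfI : mf b I < 2*(n+1) := mf_lt b hIlt
  by_cases hadj : mf b I = I + 1
  · exact ⟨I, by omega, hadj⟩
  exfalso
  have h1 : I + 1 < mf b I := by omega
  have h2 := mf_nc b (by omega : I + 1 < 2*(n+1)) (by omega : I < I + 1) h1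
  have h3 : I + 1 < mf b (I+1) := by
    have := mf_ne b (by omega : I + 1 < 2*(n+1))
    omega
  have h4 : I + 1 ∈ T := by
    simp only [hT, Finset.mem_filter, Finset.mem_range]
    omega
  have := hmin (I+1) h4
  omega

lemma mf_shift {n : ℕ} (m : Matching n) {x y : ℕ} (hx : x < 2*n) (h : mf m x = y) :
    mf m y = x := by rw [← h, mf_invol m hx]

def Efun (I j : ℕ) : ℕ := if j < I then j else j + 2

def dfun (I x : ℕ) : ℕ := if x < I then x else x - 2

def Gfun {n : ℕ} (m : Matching (n+1)) (I : ℕ) (x : ℕ) : ℕ :=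
  if mf m x = I then mf m (I+1) else if mf m x = I + 1 then mf m I else mf m x

def isC (N I x : ℕ) : Prop := x < N ∧ x ≠ I ∧ x ≠ I + 1

lemma isC_Efun {n I : ℕ} (hI : I + 1 < 2*(n+1)) {j : ℕ} (hj : j < 2*n) :
    isC (2*(n+1)) I (Efun I j) := by
  unfold isC Efun; split <;> omega

lemma dE {I : ℕ} (j : ℕ) : dfun I (Efun I j) = j := by
  by_cases h : j < I
  · simp [Efun, dfun, h]
  · simp only [Efun, dfun, if_neg h]
    rw [if_neg (by omega)]
    omega

lemma Ed {N I x : ℕ} (h : isC N I x) : Efun I (dfun I x) = x := by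
  obtain ⟨_, h1, h2⟩ := h
  by_cases hx : x < I
  · simp [Efun, dfun, hx]
  · simp only [dfun, if_neg hx, Efun]
    rw [if_neg (by omega)]
    omega

lemma dfun_lt {n I : ℕ} (hI : I + 1 < 2*(n+1)) {x : ℕ} (h : isC (2*(n+1)) I x) :
    dfun I x < 2*n := by
  obtain ⟨h1, h2, h3⟩ := h; unfold dfun; split <;> omega

lemma dfun_lt_iff {N I x y : ℕ} (hx : isC N I x) (hy : isC N I y) :
    dfun I x < dfun I y ↔ x < y := by
  obtain ⟨_, _, _⟩ := hx; obtain ⟨_, _, _⟩ := hy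
  unfold dfun; split <;> split <;> omega

lemma Efun_lt_iff (I : ℕ) (j j' : ℕ) : Efun I j < Efun I j' ↔ j < j' := by
  unfold Efun; split <;> split <;> omega

section Gl

variable {n I : ℕ} (m : Matching (n+1)) (hI : I + 1 < 2*(n+1))

lemma Gfun_other {x : ℕ} (h1 : mf m x ≠ I) (h2 : mf m x ≠ I + 1) :
    Gfun m I x = mf m x := by
  unfold Gfun; rw [if_neg h1, if_neg h2]

include hI

lemma Gfun_p : Gfun m I (mf m I) = mf m (I+1) := by
  unfold Gfun
  rw [if_pos (mf_invol m (by omega : I < 2*(n+1)))]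

lemma Gfun_q : Gfun m I (mf m (I+1)) = mf m I := by
  unfold Gfun
  have h := mf_invol m (by omega : I + 1 < 2*(n+1))
  rw [if_neg (by omega), if_pos h]

lemma G_isC {x : ℕ} (hx : isC (2*(n+1)) I x) : isC (2*(n+1)) I (Gfun m I x) := by
  obtain ⟨hxN, hxI, hxI1⟩ := hx
  have hIN : I < 2*(n+1) := by omega
  have hpN : mf m I < 2*(n+1) := mf_lt m hIN
  have hqN : mf m (I+1) < 2*(n+1) := mf_lt m hI
  by_cases h1 : mf m x = I
  · have hx1 : x = mf m I := (mf_shift m hxN h1).symm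
    rw [show Gfun m I x = mf m (I+1) from by unfold Gfun; rw [if_pos h1]]
    refine ⟨hqN, ?_, mf_ne m hI⟩
    intro hc
    have := mf_shift m hI hc
    omega
  by_cases h2 : mf m x = I + 1
  · have hx1 : x = mf m (I+1) := (mf_shift m hxN h2).symm
    rw [show Gfun m I x = mf m I from by unfold Gfun; rw [if_neg h1, if_pos h2]]
    refine ⟨hpN, mf_ne m hIN, ?_⟩
    intro hc
    have := mf_shift m hIN hc
    omega
  · rw [Gfun_other m h1 h2]
    exact ⟨mf_lt m hxN, h1, h2⟩

lemma G_invol {x : ℕ} (hx : isC (2*(n+1)) I x) : Gfun m I (Gfun m I x) = x := by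
  obtain ⟨hxN, hxI, hxI1⟩ := hx
  have hIN : I < 2*(n+1) := by omega
  by_cases h1 : mf m x = I
  · have hx1 : mf m I = x := mf_shift m hxN h1
    rw [show Gfun m I x = mf m (I+1) from by unfold Gfun; rw [if_pos h1],
      Gfun_q m hI, hx1]
  by_cases h2 : mf m x = I + 1
  · have hx1 : mf m (I+1) = x := mf_shift m hxN h2
    rw [show Gfun m I x = mf m I from by unfold Gfun; rw [if_neg h1, if_pos h2],
      Gfun_p m hI, hx1]
  · rw [Gfun_other m h1 h2]
    have hmx : mf m (mf m x) = x := mf_invol m hxN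
    rw [Gfun_other m (by omega) (by omega), hmx]

lemma G_ne {x : ℕ} (hx : isC (2*(n+1)) I x) : Gfun m I x ≠ x := by
  obtain ⟨hxN, hxI, hxI1⟩ := hx
  have hIN : I < 2*(n+1) := by omega
  by_cases h1 : mf m x = I
  · have hx1 : mf m I = x := mf_shift m hxN h1
    rw [show Gfun m I x = mf m (I+1) from by unfold Gfun; rw [if_pos h1]]
    intro hc
    have : mf m (I+1) = mf m I := by rw [hc, hx1]
    have := mf_inj m hI hIN this
    omega
  by_cases h2 : mf m x = I + 1
  · have hx1 : mf m (I+1) = x := mf_shift m hxN h2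
    rw [show Gfun m I x = mf m I from by unfold Gfun; rw [if_neg h1, if_pos h2]]
    intro hc
    have : mf m I = mf m (I+1) := by rw [hc, hx1]
    have := mf_inj m hIN hI this
    omega
  · rw [Gfun_other m h1 h2]
    exact mf_ne m hxN

end Gl
section Gnc

variable {n I : ℕ} (m : Matching (n+1)) (hI : I + 1 < 2*(n+1))
include hI

lemma G_nc {x y : ℕ} (hx : isC (2*(n+1)) I x) (hy : isC (2*(n+1)) I y)
    (hxy : x < y) (hyg : y < Gfun m I x) :
    x < Gfun m I y ∧ Gfun m I y < Gfun m I x := by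
  have hIN : I < 2*(n+1) := by omega
  have hI1N : I + 1 < 2*(n+1) := hI
  have hpN : mf m I < 2*(n+1) := mf_lt m hIN
  have hqN : mf m (I+1) < 2*(n+1) := mf_lt m hI
  have hpI : mf m I ≠ I := mf_ne m hIN
  have hqI1 : mf m (I+1) ≠ I + 1 := mf_ne m hI
  obtain ⟨hxN, hxI, hxI1⟩ := hx
  obtain ⟨hyN, hyI, hyI1⟩ := hy
  by_cases hsh : mf m I = I + 1
  · have hGz : ∀ z, z < 2*(n+1) → z ≠ I → z ≠ I + 1 → Gfun m I z = mf m z := by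
      intro z hz h1 h2
      refine Gfun_other m ?_ ?_
      · intro hc; have := mf_shift m hz hc; omega
      · intro hc
        have h3 := mf_shift m hz hc
        have h4 := mf_shift m (by omega : I < 2*(n+1)) hsh
        omega
    rw [hGz x hxN hxI hxI1] at hyg
    rw [hGz x hxN hxI hxI1, hGz y hyN hyI hyI1]
    exact mf_nc m hyN hxy hyg
  · have hqI : mf m (I+1) ≠ I := by
      intro hc
      have := mf_shift m hI hc
      omega
    have hGp : Gfun m I (mf m I) = mf m (I+1) := Gfun_p m hI
    have hGq : Gfun m I (mf m (I+1)) = mf m I := Gfun_q m hI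
    have hGo : ∀ z, z < 2*(n+1) → z ≠ mf m I → z ≠ mf m (I+1) → Gfun m I z = mf m z := by
      intro z hz h1 h2
      refine Gfun_other m ?_ ?_
      · intro hc; exact h1 (mf_shift m hz hc).symm
      · intro hc; exact h2 (mf_shift m hz hc).symm
    by_cases hpI' : mf m I < I
    · by_cases hqI' : mf m (I+1) < I
      · -- config 1 : q < p < I
        have hqp : mf m (I+1) < mf m I := by
          have h2 : I < mf m (mf m (I+1)) := by rw [mf_invol m hI]; omega
          have := mf_nc m hIN hqI' h2
          omega
        by_cases hxu : x = mf m (I+1)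
        · subst hxu
          rw [hGq] at hyg ⊢
          have hyp : y ≠ mf m I := by omega
          have hyq : y ≠ mf m (I+1) := by omega
          rw [hGo y hyN hyp hyq]
          have h2 : y < mf m (mf m (I+1)) := by rw [mf_invol m hI]; omega
          have h3 := mf_nc m hyN hxy h2
          rw [mf_invol m hI] at h3
          have h4 : mf m y ≠ I := by
            intro hc; have := mf_shift m hyN hc; omega
          have h5 : mf m y ≠ mf m I := by
            intro hc; have := mf_inj m hyN hIN hc; omega
          by_cases h6 : mf m y < mf m I
          · exact ⟨h3.1, h6⟩
          · exfalso
            have h7 : mf m I < mf m y := by omega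
            have h9 := mf_nc m (mf_lt m hyN) h7 (by rw [mf_invol m hIN]; omega)
            rw [mf_invol m hyN] at h9
            omega
        · by_cases hxv : x = mf m I
          · exfalso; subst hxv; rw [hGp] at hyg; omega
          · rw [hGo x hxN hxv hxu] at hyg ⊢
            by_cases hyu : y = mf m (I+1)
            · subst hyu
              rw [hGq]
              have h1 := mf_nc m hqN hxy hyg
              rw [mf_invol m hI] at h1
              exact mf_nc m hIN (by omega : x < I) (by omega : I < mf m x)
            · by_cases hyv : y = mf m I
              · subst hyv
                rw [hGp]
                have h1 := mf_nc m hpN hxy hyg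
                rw [mf_invol m hIN] at h1
                have hne1 : mf m x ≠ I + 1 := by
                  intro hc; have := mf_shift m hxN hc; omega
                exact mf_nc m hI1N (by omega : x < I+1) (by omega : I+1 < mf m x)
              · rw [hGo y hyN hyv hyu]
                exact mf_nc m hyN hxy hyg
      · -- config 2 : p < I < I+1 < q
        have hq2 : I + 1 < mf m (I+1) := by omega
        by_cases hxu : x = mf m I
        · subst hxu
          rw [hGp] at hyg ⊢
          have hyp : y ≠ mf m I := by omega
          have hyq : y ≠ mf m (I+1) := by omega
          rw [hGo y hyN hyp hyq]
          by_cases hyI' : y < I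
          · have h1 := mf_nc m hyN hxy (by rw [mf_invol m hIN]; omega)
            rw [mf_invol m hIN] at h1
            omega
          · have hyI2 : I + 1 < y := by omega
            have h1 := mf_nc m hyN hyI2 (by omega : y < mf m (I+1))
            omega
        · by_cases hxv : x = mf m (I+1)
          · exfalso; subst hxv; rw [hGq] at hyg; omega
          · rw [hGo x hxN hxu hxv] at hyg ⊢
            by_cases hyu : y = mf m I
            · subst hyu
              rw [hGp]
              have h1 := mf_nc m hpN hxy hyg
              rw [mf_invol m hIN] at h1
              have hne1 : mf m x ≠ I + 1 := by
                intro hc; have := mf_shift m hxN hc; omega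
              exact mf_nc m hI1N (by omega : x < I+1) (by omega : I+1 < mf m x)
            · by_cases hyv : y = mf m (I+1)
              · subst hyv
                rw [hGq]
                have h1 := mf_nc m hqN hxy hyg
                rw [mf_invol m hI] at h1
                exact mf_nc m hIN (by omega : x < I) (by omega : I < mf m x)
              · rw [hGo y hyN hyu hyv]
                exact mf_nc m hyN hxy hyg
    · -- config 3 : I+1 < q < p
      have hp3 : I + 1 < mf m I := by omega
      have hq3 : I + 1 < mf m (I+1) := by
        by_contra hc
        have hq' : mf m (I+1) < I := by omega
        have h1 := mf_nc m hIN hq' (by rw [mf_invol m hI]; omega)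
        rw [mf_invol m hI] at h1
        omega
      have hqp : mf m (I+1) < mf m I := by
        have h1 := mf_nc m hI1N (by omega : I < I + 1) (by omega : I + 1 < mf m I)
        omega
      by_cases hxu : x = mf m (I+1)
      · subst hxu
        rw [hGq] at hyg ⊢
        have hyp : y ≠ mf m I := by omega
        have hyq : y ≠ mf m (I+1) := by omega
        rw [hGo y hyN hyp hyq]
        have h1 := mf_nc m hyN (by omega : I < y) (by omega : y < mf m I)
        have h2 : mf m y ≠ I + 1 := by
          intro hc; have := mf_shift m hyN hc; omega
        by_cases h3 : mf m (I+1) < mf m y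
        · exact ⟨h3, h1.2⟩
        · exfalso
          have h4 : mf m y ≠ mf m (I+1) := by
            intro hc; have := mf_inj m hyN hI hc; omega
          have h5 := mf_nc m (mf_lt m hyN) (by omega : I + 1 < mf m y)
            (by omega : mf m y < mf m (I+1))
          rw [mf_invol m hyN] at h5
          omega
      · by_cases hxv : x = mf m I
        · exfalso; subst hxv; rw [hGp] at hyg; omega
        · rw [hGo x hxN hxv hxu] at hyg ⊢
          by_cases hyu : y = mf m (I+1)
          · subst hyu
            rw [hGq]
            have h1 := mf_nc m hqN hxy hyg
            rw [mf_invol m hI] at h1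
            exact mf_nc m hIN (by omega : x < I) (by omega : I < mf m x)
          · by_cases hyv : y = mf m I
            · subst hyv
              rw [hGp]
              have h1 := mf_nc m hpN hxy hyg
              rw [mf_invol m hIN] at h1
              have hne1 : mf m x ≠ I + 1 := by
                intro hc; have := mf_shift m hxN hc; omega
              exact mf_nc m hI1N (by omega : x < I+1) (by omega : I+1 < mf m x)
            · rw [hGo y hyN hyv hyu]
              exact mf_nc m hyN hxy hyg

end Gnc

def delM {n : ℕ} (m : Matching (n+1)) (I : ℕ) (hI : I + 1 < 2*(n+1)) : Matching n :=
  ofNat n (fun x => dfun I (Gfun m I (Efun I x)))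
    (fun x hx => dfun_lt hI (G_isC m hI (isC_Efun hI hx)))
    (fun x hx => by
      show dfun I (Gfun m I (Efun I (dfun I (Gfun m I (Efun I x))))) = x
      have h1 := isC_Efun hI hx
      have h2 := G_isC m hI h1
      rw [Ed h2, G_invol m hI h1, dE])
    (fun x hx h => by
      have h' : dfun I (Gfun m I (Efun I x)) = x := h
      have h1 := isC_Efun hI hx
      have h2 := G_isC m hI h1
      have hEq : Gfun m I (Efun I x) = Efun I x := by
        conv_lhs => rw [← Ed h2]
        rw [h']
      exact G_ne m hI h1 hEq)
    (fun x y hy hxy hyx => by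
      have h1 := isC_Efun hI (lt_trans hxy hy)
      have h2 := isC_Efun hI hy
      have hg1 := G_isC m hI h1
      have hg2 := G_isC m hI h2
      have hEcomp : ∀ z w : ℕ, Efun I z < Efun I w ↔ z < w := Efun_lt_iff I
      have hyx' : Efun I y < Gfun m I (Efun I x) := by
        have h3 : dfun I (Gfun m I (Efun I x)) = dfun I (Gfun m I (Efun I x)) := rfl
        have h4 := (hEcomp y (dfun I (Gfun m I (Efun I x)))).mpr hyx
        rwa [Ed hg1] at h4
      have main := G_nc m hI h1 h2 ((hEcomp x y).mpr hxy) hyx'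
      constructor
      · have h5 := (dfun_lt_iff h1 hg2).mpr main.1
        rwa [dE] at h5
      · exact (dfun_lt_iff hg2 hg1).mpr main.2)

lemma mf_delM {n : ℕ} (m : Matching (n+1)) (I : ℕ) (hI : I + 1 < 2*(n+1)) {x : ℕ}
    (hx : x < 2*n) : mf (delM m I hI) x = dfun I (Gfun m I (Efun I x)) :=
  mf_ofNat n _ _ _ _ _ hx
def pre (n : ℕ) (m1 m2 : Matching n) (i j : Fin (2*n)) : Prop := m1.f i = j ∨ m2.f i = j

lemma mf_fin {n : ℕ} (m : Matching n) (i : Fin (2*n)) : mf m ↑i = ↑(m.f i) :=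
  mf_eq m i.2

lemma pre_of_mf1 {n : ℕ} (m1 m2 : Matching n) (i j : Fin (2*n)) (h : mf m1 ↑i = ↑j) :
    pre n m1 m2 i j := Or.inl (Fin.ext ((mf_fin m1 i).symm.trans h))

lemma pre_of_mf2 {n : ℕ} (m1 m2 : Matching n) (i j : Fin (2*n)) (h : mf m2 ↑i = ↑j) :
    pre n m1 m2 i j := Or.inr (Fin.ext ((mf_fin m2 i).symm.trans h))

lemma pre_elim {n : ℕ} (m1 m2 : Matching n) (i j : Fin (2*n)) (h : pre n m1 m2 i j) :
    mf m1 ↑i = ↑j ∨ mf m2 ↑i = ↑j := by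
  rcases h with h | h
  · left; rw [mf_fin m1 i, h]
  · right; rw [mf_fin m2 i, h]

lemma eqvGen_lift {α : Type*} {β : Sort*} {r : α → α → Prop} (f : α → β)
    (hf : ∀ x y, r x y → f x = f y) (x y : α) (h : Relation.EqvGen r x y) : f x = f y := by
  induction h with
  | rel u v h => exact hf u v h
  | refl u => rfl
  | symm u v _ ih => exact ih.symm
  | trans u v w _ _ ih1 ih2 => exact ih1.trans ih2

def liftC {n' : ℕ} {a b : Matching n'} {β : Sort*} (f : Fin (2*n') → β)
    (hf : ∀ x y, pre n' a b x y → f x = f y) : Circles n' a b → β :=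
  Quotient.lift f (fun x y hxy => eqvGen_lift f hf x y hxy)

lemma liftC_mk {n' : ℕ} {a b : Matching n'} {β : Sort*} (f : Fin (2*n') → β)
    (hf : ∀ x y, pre n' a b x y → f x = f y) (x : Fin (2*n')) :
    liftC f hf (Quotient.mk (circleSetoid n' a b) x) = f x := rfl

lemma sound' {n' : ℕ} {a b : Matching n'} {x y : Fin (2*n')}
    (h : Relation.EqvGen (pre n' a b) x y) :
    Quotient.mk (circleSetoid n' a b) x = Quotient.mk (circleSetoid n' a b) y :=
  Quotient.sound h

def upF {n : ℕ} (I : ℕ) (hI : I + 1 < 2*(n+1)) (j : Fin (2*n)) : Fin (2*(n+1)) :=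
  ⟨Efun I ↑j, (isC_Efun hI j.2).1⟩

section CircleCount

variable {n I : ℕ} (m1 m2 : Matching (n+1)) (hI : I + 1 < 2*(n+1))
  (hb : mf m2 I = I + 1)

include hI hb in
lemma up_rel (j j' : Fin (2*n))
    (h : pre n (delM m1 I hI) (delM m2 I hI) j j') :
    Relation.EqvGen (pre (n+1) m1 m2) (upF I hI j) (upF I hI j') := by
  have hIN : I < 2*(n+1) := by omega
  have hc1 := isC_Efun (n := n) (I := I) hI j.2
  have hc1' := isC_Efun (n := n) (I := I) hI j'.2
  rcases pre_elim _ _ _ _ h with h1 | h2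
  · rw [mf_delM m1 I hI j.2] at h1
    have hg := G_isC m1 hI hc1
    have hE : Gfun m1 I (Efun I ↑j) = Efun I ↑j' := by
      have h3 := congrArg (Efun I) h1
      rwa [Ed hg] at h3
    by_cases ha : mf m1 (Efun I ↑j) = I
    · have hq : mf m1 (I+1) = Efun I ↑j' := by
        rw [← hE]; unfold Gfun; rw [if_pos ha]
      refine Relation.EqvGen.trans _ (⟨I, hIN⟩ : Fin (2*(n+1))) _
        (Relation.EqvGen.rel _ _ (pre_of_mf1 m1 m2 _ _ ha)) ?_
      refine Relation.EqvGen.trans _ (⟨I+1, hI⟩ : Fin (2*(n+1))) _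
        (Relation.EqvGen.rel _ _ (pre_of_mf2 m1 m2 _ _ hb)) ?_
      exact Relation.EqvGen.rel _ _ (pre_of_mf1 m1 m2 _ _ hq)
    · by_cases ha2 : mf m1 (Efun I ↑j) = I + 1
      · have hq : mf m1 I = Efun I ↑j' := by
          rw [← hE]; unfold Gfun; rw [if_neg ha, if_pos ha2]
        refine Relation.EqvGen.trans _ (⟨I+1, hI⟩ : Fin (2*(n+1))) _
          (Relation.EqvGen.rel _ _ (pre_of_mf1 m1 m2 _ _ ha2)) ?_
        refine Relation.EqvGen.trans _ (⟨I, hIN⟩ : Fin (2*(n+1))) _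
          (Relation.EqvGen.rel _ _ (pre_of_mf2 m1 m2 _ _ (mf_shift m2 hIN hb))) ?_
        exact Relation.EqvGen.rel _ _ (pre_of_mf1 m1 m2 _ _ hq)
      · rw [Gfun_other m1 ha ha2] at hE
        exact Relation.EqvGen.rel _ _ (pre_of_mf1 m1 m2 _ _ hE)
  · rw [mf_delM m2 I hI j.2] at h2
    have hg := G_isC m2 hI hc1
    have hE : Gfun m2 I (Efun I ↑j) = Efun I ↑j' := by
      have h3 := congrArg (Efun I) h2
      rwa [Ed hg] at h3
    have hne1 : mf m2 (Efun I ↑j) ≠ I := by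
      intro hc
      have := mf_shift m2 hc1.1 hc
      rw [hb] at this
      exact hc1.2.2 this.symm
    have hne2 : mf m2 (Efun I ↑j) ≠ I + 1 := by
      intro hc
      have := mf_shift m2 hc1.1 hc
      rw [mf_shift m2 hIN hb] at this
      exact hc1.2.1 this.symm
    rw [Gfun_other m2 hne1 hne2] at hE
    exact Relation.EqvGen.rel _ _ (pre_of_mf2 m1 m2 _ _ hE)

end CircleCount
def piv {n : ℕ} (m1 : Matching (n+1)) (I : ℕ) (x : ℕ) : ℕ :=
  if x = I then mf m1 I else if x = I + 1 then mf m1 (I+1) else x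

section Down

variable {n I : ℕ} (m1 m2 : Matching (n+1)) (hI : I + 1 < 2*(n+1))
  (hb : mf m2 I = I + 1) (hsh : mf m1 I ≠ I + 1)

include hI hsh in
lemma piv_isC {x : ℕ} (hx : x < 2*(n+1)) : isC (2*(n+1)) I (piv m1 I x) := by
  have hIN : I < 2*(n+1) := by omega
  have hqI : mf m1 (I+1) ≠ I := by
    intro hc
    exact hsh (mf_shift m1 hI hc)
  unfold piv
  by_cases h1 : x = I
  · rw [if_pos h1]
    exact ⟨mf_lt m1 hIN, mf_ne m1 hIN, hsh⟩
  · rw [if_neg h1]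
    by_cases h2 : x = I + 1
    · rw [if_pos h2]
      exact ⟨mf_lt m1 hI, hqI, mf_ne m1 hI⟩
    · rw [if_neg h2]
      exact ⟨hx, h1, h2⟩

def downF (x : Fin (2*(n+1))) : Fin (2*n) :=
  ⟨dfun I (piv m1 I ↑x), dfun_lt hI (piv_isC m1 hI hsh x.2)⟩

include hb in
lemma down_rel (x y : Fin (2*(n+1))) (h : pre (n+1) m1 m2 x y) :
    Relation.EqvGen (pre n (delM m1 I hI) (delM m2 I hI))
      (downF m1 hI hsh x) (downF m1 hI hsh y) := by
  have hIN : I < 2*(n+1) := by omega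
  have hpI : mf m1 I ≠ I := mf_ne m1 hIN
  have hqI1 : mf m1 (I+1) ≠ I + 1 := mf_ne m1 hI
  have hqI : mf m1 (I+1) ≠ I := fun hc => hsh (mf_shift m1 hI hc)
  have hpC : isC (2*(n+1)) I (mf m1 I) := ⟨mf_lt m1 hIN, hpI, hsh⟩
  have hqC : isC (2*(n+1)) I (mf m1 (I+1)) := ⟨mf_lt m1 hI, hqI, hqI1⟩
  have hvalp : (downF m1 hI hsh x : Fin (2*n)) = downF m1 hI hsh x := rfl
  rcases pre_elim _ _ _ _ h with h1 | h2
  · -- m1 generator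
    by_cases hx1 : (x:ℕ) = I
    · have hy1 : (y:ℕ) = mf m1 I := by rw [← h1, hx1]
      have : downF m1 hI hsh x = downF m1 hI hsh y := by
        apply Fin.ext
        show dfun I (piv m1 I ↑x) = dfun I (piv m1 I ↑y)
        rw [hx1, hy1]
        unfold piv
        rw [if_pos rfl, if_neg hpI, if_neg hsh]
      rw [this]
      exact Relation.EqvGen.refl _
    · by_cases hx2 : (x:ℕ) = I + 1
      · have hy1 : (y:ℕ) = mf m1 (I+1) := by rw [← h1, hx2]
        have : downF m1 hI hsh x = downF m1 hI hsh y := by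
          apply Fin.ext
          show dfun I (piv m1 I ↑x) = dfun I (piv m1 I ↑y)
          rw [hx2, hy1]
          unfold piv
          rw [if_neg (by omega : I + 1 ≠ I), if_pos rfl, if_neg hqI, if_neg hqI1]
        rw [this]
        exact Relation.EqvGen.refl _
      · by_cases hy1 : (y:ℕ) = I
        · have hx' : (x:ℕ) = mf m1 I := by
            have := mf_shift m1 x.2 (h1.trans hy1)
            omega
          have : downF m1 hI hsh x = downF m1 hI hsh y := by
            apply Fin.ext
            show dfun I (piv m1 I ↑x) = dfun I (piv m1 I ↑y)
            rw [hy1, hx']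
            unfold piv
            rw [if_neg hpI, if_neg hsh, if_pos rfl]
          rw [this]
          exact Relation.EqvGen.refl _
        · by_cases hy2 : (y:ℕ) = I + 1
          · have hx' : (x:ℕ) = mf m1 (I+1) := by
              have := mf_shift m1 x.2 (h1.trans hy2)
              omega
            have : downF m1 hI hsh x = downF m1 hI hsh y := by
              apply Fin.ext
              show dfun I (piv m1 I ↑x) = dfun I (piv m1 I ↑y)
              rw [hy2, hx']
              unfold piv
              rw [if_neg hqI, if_neg hqI1, if_neg (by omega : I + 1 ≠ I), if_pos rfl]
            rw [this]
            exact Relation.EqvGen.refl _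
          · -- generic m1 arc
            have hxC : isC (2*(n+1)) I ↑x := ⟨x.2, hx1, hx2⟩
            have hyC : isC (2*(n+1)) I ↑y := ⟨y.2, hy1, hy2⟩
            apply Relation.EqvGen.rel
            apply pre_of_mf1
            show mf (delM m1 I hI) (dfun I (piv m1 I ↑x)) = dfun I (piv m1 I ↑y)
            rw [show piv m1 I ↑x = ↑x from by unfold piv; rw [if_neg hx1, if_neg hx2],
              show piv m1 I ↑y = ↑y from by unfold piv; rw [if_neg hy1, if_neg hy2]]
            rw [mf_delM m1 I hI (dfun_lt hI hxC), Ed hxC,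
              Gfun_other m1 (by omega : mf m1 ↑x ≠ I) (by omega : mf m1 ↑x ≠ I + 1), h1]
  · -- m2 generator
    by_cases hx1 : (x:ℕ) = I
    · have hy1 : (y:ℕ) = I + 1 := by rw [← h2, hx1, hb]
      apply Relation.EqvGen.rel
      apply pre_of_mf1
      show mf (delM m1 I hI) (dfun I (piv m1 I ↑x)) = dfun I (piv m1 I ↑y)
      rw [show piv m1 I ↑x = mf m1 I from by unfold piv; rw [hx1, if_pos rfl],
        show piv m1 I ↑y = mf m1 (I+1) from by
          unfold piv; rw [hy1, if_neg (by omega : I + 1 ≠ I), if_pos rfl]]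
      rw [mf_delM m1 I hI (dfun_lt hI hpC), Ed hpC, Gfun_p m1 hI]
    · by_cases hx2 : (x:ℕ) = I + 1
      · have hy1 : (y:ℕ) = I := by
          rw [← h2, hx2, mf_shift m2 hIN hb]
        apply Relation.EqvGen.rel
        apply pre_of_mf1
        show mf (delM m1 I hI) (dfun I (piv m1 I ↑x)) = dfun I (piv m1 I ↑y)
        rw [show piv m1 I ↑x = mf m1 (I+1) from by
            unfold piv; rw [hx2, if_neg (by omega : I + 1 ≠ I), if_pos rfl],
          show piv m1 I ↑y = mf m1 I from by unfold piv; rw [hy1, if_pos rfl]]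
        rw [mf_delM m1 I hI (dfun_lt hI hqC), Ed hqC, Gfun_q m1 hI]
      · have hy1 : (y:ℕ) ≠ I := by
          intro hc
          have := mf_shift m2 x.2 (h2.trans hc)
          rw [hb] at this
          omega
        have hy2 : (y:ℕ) ≠ I + 1 := by
          intro hc
          have := mf_shift m2 x.2 (h2.trans hc)
          rw [mf_shift m2 hIN hb] at this
          omega
        have hxC : isC (2*(n+1)) I ↑x := ⟨x.2, hx1, hx2⟩
        apply Relation.EqvGen.rel
        apply pre_of_mf2
        show mf (delM m2 I hI) (dfun I (piv m1 I ↑x)) = dfun I (piv m1 I ↑y)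
        rw [show piv m1 I ↑x = ↑x from by unfold piv; rw [if_neg hx1, if_neg hx2],
          show piv m1 I ↑y = ↑y from by unfold piv; rw [if_neg hy1, if_neg hy2]]
        rw [mf_delM m2 I hI (dfun_lt hI hxC), Ed hxC,
          Gfun_other m2 (by omega : mf m2 ↑x ≠ I) (by omega : mf m2 ↑x ≠ I + 1), h2]

end Down
section Equivs

variable {n I : ℕ} (m1 m2 : Matching (n+1)) (hI : I + 1 < 2*(n+1))
  (hb : mf m2 I = I + 1)

noncomputable def circEquivNS (hsh : mf m1 I ≠ I + 1) :
    Circles (n+1) m1 m2 ≃ Circles n (delM m1 I hI) (delM m2 I hI) where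
  toFun := liftC (fun x => Quotient.mk _ (downF m1 hI hsh x))
    (fun x y h => sound' (down_rel m1 m2 hI hb hsh x y h))
  invFun := liftC (fun j => Quotient.mk _ (upF I hI j))
    (fun j j' h => sound' (up_rel m1 m2 hI hb j j' h))
  left_inv := by
    apply Quotient.ind
    intro x
    show Quotient.mk _ (upF I hI (downF m1 hI hsh x)) = Quotient.mk _ x
    have hIN : I < 2*(n+1) := by omega
    have hpI : mf m1 I ≠ I := mf_ne m1 hIN
    have hqI1 : mf m1 (I+1) ≠ I + 1 := mf_ne m1 hI
    have hqI : mf m1 (I+1) ≠ I := fun hc => hsh (mf_shift m1 hI hc)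
    have hpC : isC (2*(n+1)) I (mf m1 I) := ⟨mf_lt m1 hIN, hpI, hsh⟩
    have hqC : isC (2*(n+1)) I (mf m1 (I+1)) := ⟨mf_lt m1 hI, hqI, hqI1⟩
    by_cases hx1 : (x:ℕ) = I
    · apply sound'
      apply Relation.EqvGen.rel
      apply pre_of_mf1
      show mf m1 (Efun I (dfun I (piv m1 I ↑x))) = ↑x
      rw [show piv m1 I ↑x = mf m1 I from by unfold piv; rw [hx1, if_pos rfl],
        Ed hpC, mf_invol m1 hIN, hx1]
    · by_cases hx2 : (x:ℕ) = I + 1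
      · apply sound'
        apply Relation.EqvGen.rel
        apply pre_of_mf1
        show mf m1 (Efun I (dfun I (piv m1 I ↑x))) = ↑x
        rw [show piv m1 I ↑x = mf m1 (I+1) from by
            unfold piv; rw [hx2, if_neg (by omega : I + 1 ≠ I), if_pos rfl],
          Ed hqC, mf_invol m1 hI, hx2]
      · have : upF I hI (downF m1 hI hsh x) = x := by
          apply Fin.ext
          show Efun I (dfun I (piv m1 I ↑x)) = ↑x
          rw [show piv m1 I ↑x = ↑x from by unfold piv; rw [if_neg hx1, if_neg hx2],
            Ed ⟨x.2, hx1, hx2⟩]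
        rw [this]
  right_inv := by
    apply Quotient.ind
    intro j
    show Quotient.mk _ (downF m1 hI hsh (upF I hI j)) = Quotient.mk _ j
    have hE := isC_Efun (n := n) (I := I) hI j.2
    have : downF m1 hI hsh (upF I hI j) = j := by
      apply Fin.ext
      show dfun I (piv m1 I (Efun I ↑j)) = ↑j
      rw [show piv m1 I (Efun I ↑j) = Efun I ↑j from by
          unfold piv; rw [if_neg hE.2.1, if_neg hE.2.2], dE]
    rw [this]

def toOptF (x : Fin (2*(n+1))) : Option (Circles n (delM m1 I hI) (delM m2 I hI)) :=
  if h : (x:ℕ) = I ∨ (x:ℕ) = I + 1 then none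
  else some (Quotient.mk _
    ⟨dfun I ↑x, dfun_lt hI ⟨x.2, (not_or.mp h).1, (not_or.mp h).2⟩⟩)

include hb in
lemma toOptF_wd (hsh : mf m1 I = I + 1) (x y : Fin (2*(n+1)))
    (h : pre (n+1) m1 m2 x y) : toOptF m1 m2 hI x = toOptF m1 m2 hI y := by
  have hIN : I < 2*(n+1) := by omega
  have hsh1 : mf m1 (I+1) = I := mf_shift m1 hIN hsh
  have hb1 : mf m2 (I+1) = I := mf_shift m2 hIN hb
  rcases pre_elim _ _ _ _ h with h1 | h1
  case inl =>
    by_cases hx : (x:ℕ) = I ∨ (x:ℕ) = I + 1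
    · have hy : (y:ℕ) = I ∨ (y:ℕ) = I + 1 := by
        rcases hx with hx | hx <;> rw [hx] at h1
        · right; omega
        · left; rw [hsh1] at h1; omega
      unfold toOptF
      rw [dif_pos hx, dif_pos hy]
    · have hy : ¬((y:ℕ) = I ∨ (y:ℕ) = I + 1) := by
        rintro (hy | hy) <;> rw [hy] at h1
        · have := mf_shift m1 x.2 h1
          rw [hsh] at this
          omega
        · have := mf_shift m1 x.2 h1
          rw [hsh1] at this
          omega
      unfold toOptF
      rw [dif_neg hx, dif_neg hy]
      congr 1
      apply sound'
      apply Relation.EqvGen.rel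
      apply pre_of_mf1
      have hxC : isC (2*(n+1)) I ↑x := ⟨x.2, (not_or.mp hx).1, (not_or.mp hx).2⟩
      show mf (delM m1 I hI) (dfun I ↑x) = dfun I ↑y
      rw [mf_delM m1 I hI (dfun_lt hI hxC), Ed hxC,
        Gfun_other m1 (by omega : mf m1 ↑x ≠ I) (by omega : mf m1 ↑x ≠ I + 1), h1]
  case inr =>
    by_cases hx : (x:ℕ) = I ∨ (x:ℕ) = I + 1
    · have hy : (y:ℕ) = I ∨ (y:ℕ) = I + 1 := by
        rcases hx with hx | hx <;> rw [hx] at h1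
        · right; omega
        · left; rw [hb1] at h1; omega
      unfold toOptF
      rw [dif_pos hx, dif_pos hy]
    · have hy : ¬((y:ℕ) = I ∨ (y:ℕ) = I + 1) := by
        rintro (hy | hy) <;> rw [hy] at h1
        · have := mf_shift m2 x.2 h1
          rw [hb] at this
          omega
        · have := mf_shift m2 x.2 h1
          rw [hb1] at this
          omega
      unfold toOptF
      rw [dif_neg hx, dif_neg hy]
      congr 1
      apply sound'
      apply Relation.EqvGen.rel
      apply pre_of_mf2
      have hxC : isC (2*(n+1)) I ↑x := ⟨x.2, (not_or.mp hx).1, (not_or.mp hx).2⟩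
      show mf (delM m2 I hI) (dfun I ↑x) = dfun I ↑y
      rw [mf_delM m2 I hI (dfun_lt hI hxC), Ed hxC,
        Gfun_other m2 (by omega : mf m2 ↑x ≠ I) (by omega : mf m2 ↑x ≠ I + 1), h1]

noncomputable def circEquivSh (hsh : mf m1 I = I + 1) :
    Circles (n+1) m1 m2 ≃ Option (Circles n (delM m1 I hI) (delM m2 I hI)) where
  toFun := liftC (toOptF m1 m2 hI) (fun x y h => toOptF_wd m1 m2 hI hb hsh x y h)
  invFun := fun o => o.elim (Quotient.mk _ (⟨I, by omega⟩ : Fin (2*(n+1))))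
    (liftC (fun j => Quotient.mk _ (upF I hI j))
      (fun j j' h => sound' (up_rel m1 m2 hI hb j j' h)))
  left_inv := by
    apply Quotient.ind
    intro x
    by_cases hx : (x:ℕ) = I ∨ (x:ℕ) = I + 1
    · have h1 : toOptF m1 m2 hI x = none := by unfold toOptF; rw [dif_pos hx]
      show Option.elim (toOptF m1 m2 hI x) _ _ = _
      rw [h1]
      show Quotient.mk _ (⟨I, by omega⟩ : Fin (2*(n+1))) = Quotient.mk _ x
      rcases hx with hx | hx
      · congr 1
        exact Fin.ext hx.symm
      · apply sound'
        apply Relation.EqvGen.rel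
        apply pre_of_mf2
        show mf m2 ↑(⟨I, by omega⟩ : Fin (2*(n+1))) = ↑x
        exact hb.trans hx.symm
    · have hxC : isC (2*(n+1)) I ↑x := ⟨x.2, (not_or.mp hx).1, (not_or.mp hx).2⟩
      have h1 : toOptF m1 m2 hI x = some (Quotient.mk _
          ⟨dfun I ↑x, dfun_lt hI hxC⟩) := by
        unfold toOptF; rw [dif_neg hx]; rfl
      show Option.elim (toOptF m1 m2 hI x) _ _ = _
      rw [h1]
      show Quotient.mk _ (upF I hI ⟨dfun I ↑x, dfun_lt hI hxC⟩) = Quotient.mk _ x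
      have : upF I hI ⟨dfun I ↑x, dfun_lt hI hxC⟩ = x := by
        apply Fin.ext
        show Efun I (dfun I ↑x) = ↑x
        exact Ed hxC
      rw [this]
  right_inv := by
    intro o
    rcases o with _ | c
    · show toOptF m1 m2 hI ⟨I, by omega⟩ = none
      unfold toOptF
      rw [dif_pos (by left; rfl)]
    · revert c
      apply Quotient.ind
      intro j
      show toOptF m1 m2 hI (upF I hI j) = some (Quotient.mk _ j)
      have hE := isC_Efun (n := n) (I := I) hI j.2
      have hcond : ¬(((upF I hI j : Fin (2*(n+1))) : ℕ) = I ∨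
          ((upF I hI j : Fin (2*(n+1))) : ℕ) = I + 1) := by
        rintro (hc | hc)
        · exact hE.2.1 hc
        · exact hE.2.2 hc
      unfold toOptF
      rw [dif_neg hcond]
      congr 1
      exact congrArg _ (Fin.ext (dE (j : ℕ)))

include hb in
lemma card_sh (hsh : mf m1 I = I + 1) :
    Nat.card (Circles (n+1) m1 m2)
      = Nat.card (Circles n (delM m1 I hI) (delM m2 I hI)) + 1 := by
  rw [Nat.card_congr (circEquivSh m1 m2 hI hb hsh), Finite.card_option]

include hb in
lemma card_ns (hsh : mf m1 I ≠ I + 1) :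
    Nat.card (Circles (n+1) m1 m2)
      = Nat.card (Circles n (delM m1 I hI) (delM m2 I hI)) :=
  Nat.card_congr (circEquivNS m1 m2 hI hb hsh)

end Equivs
def wgt (F : ℕ → ℕ) (x : ℕ) : ℕ := if x < F x then (F x - x - 1)/2 else 0

def Sm {n : ℕ} (m : Matching n) : ℕ := ∑ x ∈ Finset.range (2*n), wgt (mf m) x

lemma wgt_del {n I : ℕ} (m : Matching (n+1)) (hI : I + 1 < 2*(n+1)) {x : ℕ}
    (hx : isC (2*(n+1)) I x) :
    wgt (mf (delM m I hI)) (dfun I x)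
      = if x < Gfun m I x then
          (Gfun m I x - x - 1)/2 - (if x < I ∧ I + 1 < Gfun m I x then 1 else 0)
        else 0 := by
  have hg := G_isC m hI hx
  unfold wgt
  rw [mf_delM m I hI (dfun_lt hI hx), Ed hx]
  by_cases h1 : x < Gfun m I x
  · rw [if_pos ((dfun_lt_iff hx hg).mpr h1), if_pos h1]
    obtain ⟨hxN, hxI, hxI1⟩ := hx
    obtain ⟨hgN, hgI, hgI1⟩ := hg
    unfold dfun
    split_ifs <;> omega
  · rw [if_neg (fun hc => h1 ((dfun_lt_iff hx hg).mp hc)), if_neg h1]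

lemma count_par {n I : ℕ} (m : Matching (n+1)) (hI : I + 1 < 2*(n+1)) :
    (I + ((Finset.range I).filter (fun x => I + 1 < mf m x)).card
       + ((Finset.range I).filter (fun x => mf m x = I ∨ mf m x = I + 1)).card) % 2
      = 0 := by
  classical
  have hA1 : Even ((Finset.range I).filter (fun x => mf m x < I)).card := by
    apply even_card_of_invol (mf m)
    · intro y hy
      simp only [Finset.mem_filter, Finset.mem_range] at hy ⊢
      refine ⟨hy.2, ?_⟩
      rw [mf_invol m (by omega : y < 2*(n+1))]
      exact hy.1
    · intro y hy
      simp only [Finset.mem_filter, Finset.mem_range] at hy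
      exact mf_invol m (by omega : y < 2*(n+1))
    · intro y hy
      simp only [Finset.mem_filter, Finset.mem_range] at hy
      exact mf_ne m (by omega : y < 2*(n+1))
  have h2 := Finset.card_filter_add_card_filter_not
    (s := Finset.range I) (p := fun x => mf m x < I)
  rw [Finset.card_range] at h2
  have h3 : (Finset.range I).filter (fun x => ¬ mf m x < I)
      = ((Finset.range I).filter (fun x => mf m x = I ∨ mf m x = I + 1))
        ∪ ((Finset.range I).filter (fun x => I + 1 < mf m x)) := by
    ext z
    simp only [Finset.mem_filter, Finset.mem_union, Finset.mem_range]
    omega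
  have h4 : Disjoint ((Finset.range I).filter (fun x => mf m x = I ∨ mf m x = I + 1))
      ((Finset.range I).filter (fun x => I + 1 < mf m x)) := by
    rw [Finset.disjoint_left]
    intro z hz1 hz2
    simp only [Finset.mem_filter] at hz1 hz2
    omega
  rw [h3, Finset.card_union_of_disjoint h4] at h2
  rw [Nat.even_iff] at hA1
  omega

lemma S_delM {n I : ℕ} (m : Matching (n+1)) (hI : I + 1 < 2*(n+1)) :
    (Sm m + Sm (delM m I hI)) % 2 = (I + if mf m I = I + 1 then 0 else 1) % 2 := by
  classical
  have hIN : I < 2*(n+1) := by omega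
  set C : Finset ℕ := (Finset.range (2*(n+1))).filter (fun x => ¬(x = I ∨ x = I + 1))
    with hCdef
  have hmemC : ∀ x : ℕ, x ∈ C ↔ isC (2*(n+1)) I x := by
    intro x
    simp only [hCdef, Finset.mem_filter, Finset.mem_range, isC]
    constructor
    · rintro ⟨h1, h2⟩; exact ⟨h1, fun hc => h2 (Or.inl hc), fun hc => h2 (Or.inr hc)⟩
    · rintro ⟨h1, h2, h3⟩; exact ⟨h1, fun hc => hc.elim h2 h3⟩
  have hA : Sm (delM m I hI) = ∑ x ∈ C, wgt (mf (delM m I hI)) (dfun I x) := by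
    unfold Sm
    refine Finset.sum_nbij' (i := fun j => Efun I j) (j := fun x => dfun I x)
      ?_ ?_ ?_ ?_ ?_
    · intro a ha
      rw [Finset.mem_range] at ha
      exact (hmemC _).mpr (isC_Efun hI ha)
    · intro a ha
      rw [Finset.mem_range]
      exact dfun_lt hI ((hmemC _).mp ha)
    · intro a _
      exact dE a
    · intro a ha
      exact Ed ((hmemC _).mp ha)
    · intro a _
      rw [dE]
  have hIne : I ∉ insert (I+1) C := by
    simp only [Finset.mem_insert]
    rintro (hc | hc)
    · omega
    · exact ((hmemC _).mp hc).2.1 rfl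
  have hI1ne : (I+1) ∉ C := fun hc => ((hmemC _).mp hc).2.2 rfl
  have hsplit : Finset.range (2*(n+1)) = insert I (insert (I+1) C) := by
    ext z
    simp only [Finset.mem_insert, Finset.mem_range, hmemC, isC]
    omega
  have hSm : Sm m = wgt (mf m) I + wgt (mf m) (I+1) + ∑ x ∈ C, wgt (mf m) x := by
    unfold Sm
    rw [hsplit, Finset.sum_insert hIne, Finset.sum_insert hI1ne]
    omega
  by_cases hsh : mf m I = I + 1
  · -- shared case
    rw [if_pos hsh]
    have hq : mf m (I+1) = I := mf_shift m hIN hsh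
    have hterm : ∀ x ∈ C, (wgt (mf m) x + wgt (mf (delM m I hI)) (dfun I x)) % 2
        = (if x < I ∧ I + 1 < mf m x then 1 else 0) % 2 := by
      intro x hxC
      have hx := (hmemC x).mp hxC
      have hne1 : mf m x ≠ I := by
        intro hc; have := mf_shift m hx.1 hc; rw [hsh] at this; exact hx.2.2 this.symm
      have hne2 : mf m x ≠ I + 1 := by
        intro hc; have := mf_shift m hx.1 hc; rw [hq] at this; exact hx.2.1 this.symm
      rw [wgt_del m hI hx, Gfun_other m hne1 hne2]
      unfold wgt
      obtain ⟨hxN, hxI, hxI1⟩ := hx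
      split_ifs <;> omega
    have hsum : (∑ x ∈ C, (wgt (mf m) x + wgt (mf (delM m I hI)) (dfun I x))) % 2
        = (∑ x ∈ C, if x < I ∧ I + 1 < mf m x then 1 else 0) % 2 := by
      rw [Finset.sum_nat_mod, Finset.sum_congr rfl hterm, ← Finset.sum_nat_mod]
    have hD : (∑ x ∈ C, if x < I ∧ I + 1 < mf m x then 1 else 0)
        = ((Finset.range I).filter (fun x => I + 1 < mf m x)).card := by
      have hset : C.filter (fun x => x < I ∧ I + 1 < mf m x)
          = (Finset.range I).filter (fun x => I + 1 < mf m x) := by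
        ext z
        simp only [Finset.mem_filter, hmemC, isC, Finset.mem_range]
        omega
      rw [← hset, Finset.card_filter]
    have hwI : wgt (mf m) I = 0 := by
      unfold wgt
      rw [if_pos (by omega : I < mf m I), hsh]
      omega
    have hwI1 : wgt (mf m) (I+1) = 0 := by
      unfold wgt
      rw [if_neg (by omega : ¬ (I + 1 < mf m (I+1)))]
    have hA2 : ((Finset.range I).filter (fun x => mf m x = I ∨ mf m x = I + 1)).card
        = 0 := by
      rw [Finset.card_eq_zero, Finset.filter_eq_empty_iff]
      intro z hz
      rw [Finset.mem_range] at hz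
      rintro (hc | hc)
      · have := mf_shift m (by omega : z < 2*(n+1)) hc
        rw [hsh] at this
        omega
      · have := mf_shift m (by omega : z < 2*(n+1)) hc
        rw [hq] at this
        omega
    have hcount := count_par m hI
    have e3 : ∑ x ∈ C, (wgt (mf m) x + wgt (mf (delM m I hI)) (dfun I x))
        = ∑ x ∈ C, wgt (mf m) x + ∑ x ∈ C, wgt (mf (delM m I hI)) (dfun I x) :=
      Finset.sum_add_distrib
    omega
  · -- non-shared case
    rw [if_neg hsh]
    have hp := mf_lt m hIN
    have hqlt := mf_lt m hI
    have hpI : mf m I ≠ I := mf_ne m hIN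
    have hqI1 : mf m (I+1) ≠ I + 1 := mf_ne m hI
    have hqI : mf m (I+1) ≠ I := fun hc => hsh (mf_shift m hI hc)
    have hpq : mf m I ≠ mf m (I+1) := fun hc => by have := mf_inj m hIN hI hc; omega
    have hpisC : isC (2*(n+1)) I (mf m I) := ⟨hp, hpI, hsh⟩
    have hqisC : isC (2*(n+1)) I (mf m (I+1)) := ⟨hqlt, hqI, hqI1⟩
    have hpC : mf m I ∈ C := (hmemC _).mpr hpisC
    have hqC : mf m (I+1) ∈ C := (hmemC _).mpr hqisC
    have hfp : mf m (mf m I) = I := mf_invol m hIN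
    have hfq : mf m (mf m (I+1)) = I + 1 := mf_invol m hI
    set C2 : Finset ℕ := (C.erase (mf m I)).erase (mf m (I+1)) with hC2def
    have hqC' : mf m (I+1) ∈ C.erase (mf m I) :=
      Finset.mem_erase.mpr ⟨fun hc => hpq hc.symm, hqC⟩
    have hsplit2 : ∀ F : ℕ → ℕ, ∑ x ∈ C, F x
        = F (mf m I) + (F (mf m (I+1)) + ∑ x ∈ C2, F x) := by
      intro F
      rw [← Finset.add_sum_erase C F hpC, ← Finset.add_sum_erase _ F hqC']
    have e1 := hsplit2 (fun x => wgt (mf m) x)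
    have e2 := hsplit2 (fun x => wgt (mf (delM m I hI)) (dfun I x))
    have e3 : ∑ x ∈ C2, (wgt (mf m) x + wgt (mf (delM m I hI)) (dfun I x))
        = ∑ x ∈ C2, wgt (mf m) x + ∑ x ∈ C2, wgt (mf (delM m I hI)) (dfun I x) :=
      Finset.sum_add_distrib
    have hterm : ∀ x ∈ C2, (wgt (mf m) x + wgt (mf (delM m I hI)) (dfun I x)) % 2
        = (if x < I ∧ I + 1 < mf m x then 1 else 0) % 2 := by
      intro x hxC2
      have hxq : x ≠ mf m (I+1) := (Finset.mem_erase.mp hxC2).1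
      have hxp : x ≠ mf m I := (Finset.mem_erase.mp (Finset.mem_erase.mp hxC2).2).1
      have hxC : x ∈ C := (Finset.mem_erase.mp (Finset.mem_erase.mp hxC2).2).2
      have hx := (hmemC x).mp hxC
      have hne1 : mf m x ≠ I := fun hc => hxp (mf_shift m hx.1 hc).symm
      have hne2 : mf m x ≠ I + 1 := fun hc => hxq (mf_shift m hx.1 hc).symm
      rw [wgt_del m hI hx, Gfun_other m hne1 hne2]
      unfold wgt
      obtain ⟨hxN, hxI, hxI1⟩ := hx
      split_ifs <;> omega
    have hsum : (∑ x ∈ C2, (wgt (mf m) x + wgt (mf (delM m I hI)) (dfun I x))) % 2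
        = (∑ x ∈ C2, if x < I ∧ I + 1 < mf m x then 1 else 0) % 2 := by
      rw [Finset.sum_nat_mod, Finset.sum_congr rfl hterm, ← Finset.sum_nat_mod]
    have hD : (∑ x ∈ C2, if x < I ∧ I + 1 < mf m x then 1 else 0)
        = ((Finset.range I).filter (fun x => I + 1 < mf m x)).card := by
      have hset : C2.filter (fun x => x < I ∧ I + 1 < mf m x)
          = (Finset.range I).filter (fun x => I + 1 < mf m x) := by
        ext z
        simp only [hC2def, Finset.mem_filter, Finset.mem_erase, hmemC, isC,
          Finset.mem_range]
        constructor
        · rintro ⟨⟨hzq, hzp, hzN, hzne1, hzne2⟩, h5, h6⟩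
          exact ⟨h5, h6⟩
        · rintro ⟨h1, h2⟩
          have hzq : z ≠ mf m (I+1) := by
            intro hc; rw [hc, hfq] at h2; omega
          have hzp : z ≠ mf m I := by
            intro hc; rw [hc, hfp] at h2; omega
          exact ⟨⟨hzq, hzp, by omega, by omega, by omega⟩, h1, h2⟩
      rw [← hset, Finset.card_filter]
    have hA2eq : (Finset.range I).filter (fun x => mf m x = I ∨ mf m x = I + 1)
        = (Finset.range I).filter (fun x => x = mf m I ∨ x = mf m (I+1)) := by
      ext z
      simp only [Finset.mem_filter, Finset.mem_range]
      constructor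
      · rintro ⟨h1, h2 | h2⟩
        · exact ⟨h1, Or.inl (mf_shift m (by omega : z < 2*(n+1)) h2).symm⟩
        · exact ⟨h1, Or.inr (mf_shift m (by omega : z < 2*(n+1)) h2).symm⟩
      · rintro ⟨h1, h2 | h2⟩
        · subst h2; exact ⟨h1, Or.inl hfp⟩
        · subst h2; exact ⟨h1, Or.inr hfq⟩
    have hcount := count_par m hI
    have hWDp0 := wgt_del m hI hpisC
    rw [Gfun_p m hI] at hWDp0
    have hWDq0 := wgt_del m hI hqisC
    rw [Gfun_q m hI] at hWDq0
    by_cases hcfg : mf m I < I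
    · by_cases hcfgq : mf m (I+1) < I
      · -- config 1 : q < p < I
        have hqp : mf m (I+1) < mf m I := by
          have h2 : I < mf m (mf m (I+1)) := by rw [hfq]; omega
          have h3 := mf_nc m hIN hcfgq h2
          omega
        obtain ⟨b1, hev1⟩ : Even (I - mf m I - 1) := by
          have h4 := evenGap m hp (by rw [hfp]; omega)
          rwa [hfp] at h4
        obtain ⟨b2, hev2⟩ : Even (I + 1 - mf m (I+1) - 1) := by
          have h4 := evenGap m hqlt (by rw [hfq]; omega)
          rwa [hfq] at h4
        have hwI : wgt (mf m) I = 0 := by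
          unfold wgt; rw [if_neg (by omega : ¬ I < mf m I)]
        have hwI1 : wgt (mf m) (I+1) = 0 := by
          unfold wgt; rw [if_neg (by omega : ¬ I + 1 < mf m (I+1))]
        have hwp : wgt (mf m) (mf m I) = (I - mf m I - 1)/2 := by
          unfold wgt; rw [hfp, if_pos hcfg]
        have hwq : wgt (mf m) (mf m (I+1)) = (I + 1 - mf m (I+1) - 1)/2 := by
          unfold wgt; rw [hfq, if_pos (by omega : mf m (I+1) < I + 1)]
        have hWDp : wgt (mf (delM m I hI)) (dfun I (mf m I)) = 0 := by
          rw [hWDp0, if_neg (by omega : ¬ mf m I < mf m (I+1))]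
        have hWDq : wgt (mf (delM m I hI)) (dfun I (mf m (I+1)))
            = (mf m I - mf m (I+1) - 1)/2 - 0 := by
          rw [hWDq0, if_pos hqp,
            if_neg (by omega : ¬ (mf m (I+1) < I ∧ I + 1 < mf m I))]
        have hE0 : ((Finset.range I).filter
            (fun x => mf m x = I ∨ mf m x = I + 1)).card = 2 := by
          rw [hA2eq]
          have hset2 : (Finset.range I).filter (fun x => x = mf m I ∨ x = mf m (I+1))
              = {mf m I, mf m (I+1)} := by
            ext z
            simp only [Finset.mem_filter, Finset.mem_range, Finset.mem_insert,
              Finset.mem_singleton]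
            constructor
            · rintro ⟨h1, h2⟩; exact h2
            · rintro (h2 | h2) <;> subst h2
              · exact ⟨hcfg, Or.inl rfl⟩
              · exact ⟨hcfgq, Or.inr rfl⟩
          rw [hset2, Finset.card_insert_of_notMem (by simp [hpq]),
            Finset.card_singleton]
        omega
      · -- config 2 : p < I < I + 1 < q
        have hq2 : I + 1 < mf m (I+1) := by omega
        obtain ⟨b1, hev1⟩ : Even (I - mf m I - 1) := by
          have h4 := evenGap m hp (by rw [hfp]; omega)
          rwa [hfp] at h4
        obtain ⟨b2, hev2⟩ : Even (mf m (I+1) - (I+1) - 1) := evenGap m hI hq2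
        have hwI : wgt (mf m) I = 0 := by
          unfold wgt; rw [if_neg (by omega : ¬ I < mf m I)]
        have hwI1 : wgt (mf m) (I+1) = (mf m (I+1) - (I+1) - 1)/2 := by
          unfold wgt; rw [if_pos hq2]
        have hwp : wgt (mf m) (mf m I) = (I - mf m I - 1)/2 := by
          unfold wgt; rw [hfp, if_pos hcfg]
        have hwq : wgt (mf m) (mf m (I+1)) = 0 := by
          unfold wgt; rw [hfq, if_neg (by omega : ¬ mf m (I+1) < I + 1)]
        have hWDp : wgt (mf (delM m I hI)) (dfun I (mf m I))
            = (mf m (I+1) - mf m I - 1)/2 - 1 := by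
          rw [hWDp0, if_pos (by omega : mf m I < mf m (I+1)),
            if_pos (⟨hcfg, hq2⟩ : mf m I < I ∧ I + 1 < mf m (I+1))]
        have hWDq : wgt (mf (delM m I hI)) (dfun I (mf m (I+1))) = 0 := by
          rw [hWDq0, if_neg (by omega : ¬ mf m (I+1) < mf m I)]
        have hE0 : ((Finset.range I).filter
            (fun x => mf m x = I ∨ mf m x = I + 1)).card = 1 := by
          rw [hA2eq]
          have hset2 : (Finset.range I).filter (fun x => x = mf m I ∨ x = mf m (I+1))
              = {mf m I} := by
            ext z
            simp only [Finset.mem_filter, Finset.mem_range, Finset.mem_singleton]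
            constructor
            · rintro ⟨h1, h2 | h2⟩
              · exact h2
              · subst h2; omega
            · rintro h2
              subst h2
              exact ⟨hcfg, Or.inl rfl⟩
          rw [hset2, Finset.card_singleton]
        omega
    · -- config 3 : I + 1 < q < p
      have hp3 : I + 1 < mf m I := by omega
      have hq3 : I + 1 < mf m (I+1) := by
        by_contra hc
        have hq' : mf m (I+1) < I := by omega
        have h1 := mf_nc m hIN hq' (by rw [hfq]; omega)
        rw [hfq] at h1
        omega
      have hqp : mf m (I+1) < mf m I := by
        have h1 := mf_nc m hI (by omega : I < I + 1) (by omega : I + 1 < mf m I)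
        omega
      obtain ⟨b1, hev1⟩ : Even (mf m I - I - 1) := evenGap m hIN (by omega)
      obtain ⟨b2, hev2⟩ : Even (mf m (I+1) - (I+1) - 1) := evenGap m hI hq3
      have hwI : wgt (mf m) I = (mf m I - I - 1)/2 := by
        unfold wgt; rw [if_pos (by omega : I < mf m I)]
      have hwI1 : wgt (mf m) (I+1) = (mf m (I+1) - (I+1) - 1)/2 := by
        unfold wgt; rw [if_pos hq3]
      have hwp : wgt (mf m) (mf m I) = 0 := by
        unfold wgt; rw [hfp, if_neg (by omega : ¬ mf m I < I)]
      have hwq : wgt (mf m) (mf m (I+1)) = 0 := by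
        unfold wgt; rw [hfq, if_neg (by omega : ¬ mf m (I+1) < I + 1)]
      have hWDp : wgt (mf (delM m I hI)) (dfun I (mf m I)) = 0 := by
        rw [hWDp0, if_neg (by omega : ¬ mf m I < mf m (I+1))]
      have hWDq : wgt (mf (delM m I hI)) (dfun I (mf m (I+1)))
          = (mf m I - mf m (I+1) - 1)/2 - 0 := by
        rw [hWDq0, if_pos hqp,
          if_neg (by omega : ¬ (mf m (I+1) < I ∧ I + 1 < mf m I))]
      have hE0 : ((Finset.range I).filter
          (fun x => mf m x = I ∨ mf m x = I + 1)).card = 0 := by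
        rw [hA2eq, Finset.card_eq_zero, Finset.filter_eq_empty_iff]
        intro z hz
        rw [Finset.mem_range] at hz
        rintro (hc | hc) <;> omega
      omega

lemma M1 : ∀ (n : ℕ) (a b : Matching n),
    (Nat.card (Circles n a b) + Sm a + Sm b + n) % 2 = 0 := by
  intro n
  induction n with
  | zero =>
    intro a b
    have hE : IsEmpty (Circles 0 a b) := by
      constructor
      intro c
      induction c using Quotient.ind with
      | _ x => exact Fin.elim0 x
    have h1 : Nat.card (Circles 0 a b) = 0 := Nat.card_of_isEmpty
    have h2 : Sm a = 0 := by unfold Sm; simp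
    have h3 : Sm b = 0 := by unfold Sm; simp
    omega
  | succ n ih =>
    intro a b
    obtain ⟨I, hI, hb⟩ := exists_adj b
    have hca := S_delM a hI
    have hcb := S_delM b hI
    rw [if_pos hb] at hcb
    have hih := ih (delM a I hI) (delM b I hI)
    by_cases hsh : mf a I = I + 1
    · have hc := card_sh a b hI hb hsh
      rw [if_pos hsh] at hca
      omega
    · have hc := card_ns a b hI hb hsh
      rw [if_neg hsh] at hca
      omega
lemma M2 {n : ℕ} (a b : Matching n) (h : ElemChange n a b) :
    (Sm a + Sm b) % 2 = 1 := by
  classical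
  obtain ⟨i1, i2, i3, i4, h12, h23, h34, hagree, hcase⟩ := h
  set Q : Finset ℕ := {(i1:ℕ), (i2:ℕ), (i3:ℕ), (i4:ℕ)} with hQdef
  have hsub : Q ⊆ Finset.range (2*n) := by
    intro z hz
    simp only [hQdef, Finset.mem_insert, Finset.mem_singleton] at hz
    rw [Finset.mem_range]
    rcases hz with h|h|h|h <;> subst h <;> exact Fin.is_lt _
  have hag : ∀ x, x < 2*n → x ∉ Q → mf a x = mf b x := by
    intro x hx hxQ
    have hmem : (⟨x, hx⟩ : Fin (2*n)) ∉ ({i1, i2, i3, i4} : Set (Fin (2*n))) := by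
      intro hc
      simp only [Set.mem_insert_iff, Set.mem_singleton_iff] at hc
      apply hxQ
      simp only [hQdef, Finset.mem_insert, Finset.mem_singleton]
      rcases hc with hc|hc|hc|hc
      · left; exact congrArg Fin.val hc
      · right; left; exact congrArg Fin.val hc
      · right; right; left; exact congrArg Fin.val hc
      · right; right; right; exact congrArg Fin.val hc
    have heq := hagree _ hmem
    rw [mf_eq a hx, mf_eq b hx, heq]
  have hsum : Sm a + Sm b
      = ∑ x ∈ Finset.range (2*n), (wgt (mf a) x + wgt (mf b) x) := by
    unfold Sm
    rw [Finset.sum_add_distrib]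
  have hsplitQ : ∑ x ∈ Finset.range (2*n) \ Q, (wgt (mf a) x + wgt (mf b) x)
      + ∑ x ∈ Q, (wgt (mf a) x + wgt (mf b) x)
      = ∑ x ∈ Finset.range (2*n), (wgt (mf a) x + wgt (mf b) x) :=
    Finset.sum_sdiff hsub
  have hrest : (∑ x ∈ Finset.range (2*n) \ Q, (wgt (mf a) x + wgt (mf b) x)) % 2
      = 0 := by
    rw [Finset.sum_nat_mod]
    have hz : ∀ x ∈ Finset.range (2*n) \ Q, (wgt (mf a) x + wgt (mf b) x) % 2 = 0 := by
      intro x hx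
      rw [Finset.mem_sdiff, Finset.mem_range] at hx
      have hw : wgt (mf a) x = wgt (mf b) x := by
        unfold wgt
        rw [hag x hx.1 hx.2]
      omega
    rw [Finset.sum_congr rfl hz]
    simp
  have hQsum : ∑ x ∈ Q, (wgt (mf a) x + wgt (mf b) x)
      = (wgt (mf a) ↑i1 + wgt (mf b) ↑i1) + ((wgt (mf a) ↑i2 + wgt (mf b) ↑i2)
        + ((wgt (mf a) ↑i3 + wgt (mf b) ↑i3) + (wgt (mf a) ↑i4 + wgt (mf b) ↑i4))) := by
    rw [hQdef]
    rw [Finset.sum_insert (by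
        simp only [Finset.mem_insert, Finset.mem_singleton]; omega),
      Finset.sum_insert (by
        simp only [Finset.mem_insert, Finset.mem_singleton]; omega),
      Finset.sum_insert (by
        simp only [Finset.mem_singleton]; omega),
      Finset.sum_singleton]
  rcases hcase with ⟨ha1, ha2, hb1, hb2⟩ | ⟨ha1, ha2, hb1, hb2⟩
  · -- a : (i1 i2), (i3 i4) ; b : (i1 i4), (i2 i3)
    have mfa1 : mf a ↑i1 = ↑i2 := by rw [mf_fin a i1, ha1]
    have mfa3 : mf a ↑i3 = ↑i4 := by rw [mf_fin a i3, ha2]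
    have mfb1 : mf b ↑i1 = ↑i4 := by rw [mf_fin b i1, hb1]
    have mfb2 : mf b ↑i2 = ↑i3 := by rw [mf_fin b i2, hb2]
    have mfa2 : mf a ↑i2 = ↑i1 := mf_shift a i1.is_lt mfa1
    have mfa4 : mf a ↑i4 = ↑i3 := mf_shift a i3.is_lt mfa3
    have mfb4 : mf b ↑i4 = ↑i1 := mf_shift b i1.is_lt mfb1
    have mfb3 : mf b ↑i3 = ↑i2 := mf_shift b i2.is_lt mfb2
    obtain ⟨c1, he1⟩ : Even ((i2:ℕ) - ↑i1 - 1) := by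
      have := evenGap a i1.is_lt (by rw [mfa1]; omega)
      rwa [mfa1] at this
    obtain ⟨c2, he2⟩ : Even ((i4:ℕ) - ↑i3 - 1) := by
      have := evenGap a i3.is_lt (by rw [mfa3]; omega)
      rwa [mfa3] at this
    obtain ⟨c3, he3⟩ : Even ((i4:ℕ) - ↑i1 - 1) := by
      have := evenGap b i1.is_lt (by rw [mfb1]; omega)
      rwa [mfb1] at this
    obtain ⟨c4, he4⟩ : Even ((i3:ℕ) - ↑i2 - 1) := by
      have := evenGap b i2.is_lt (by rw [mfb2]; omega)
      rwa [mfb2] at this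
    have w1 : wgt (mf a) ↑i1 = ((i2:ℕ) - ↑i1 - 1)/2 := by
      unfold wgt; rw [mfa1, if_pos h12]
    have w2 : wgt (mf a) ↑i2 = 0 := by
      unfold wgt; rw [mfa2, if_neg (by omega)]
    have w3 : wgt (mf a) ↑i3 = ((i4:ℕ) - ↑i3 - 1)/2 := by
      unfold wgt; rw [mfa3, if_pos h34]
    have w4 : wgt (mf a) ↑i4 = 0 := by
      unfold wgt; rw [mfa4, if_neg (by omega)]
    have w5 : wgt (mf b) ↑i1 = ((i4:ℕ) - ↑i1 - 1)/2 := by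
      unfold wgt; rw [mfb1, if_pos (by omega)]
    have w6 : wgt (mf b) ↑i2 = ((i3:ℕ) - ↑i2 - 1)/2 := by
      unfold wgt; rw [mfb2, if_pos h23]
    have w7 : wgt (mf b) ↑i3 = 0 := by
      unfold wgt; rw [mfb3, if_neg (by omega)]
    have w8 : wgt (mf b) ↑i4 = 0 := by
      unfold wgt; rw [mfb4, if_neg (by omega)]
    omega
  · -- a : (i1 i4), (i2 i3) ; b : (i1 i2), (i3 i4)
    have mfa1 : mf a ↑i1 = ↑i4 := by rw [mf_fin a i1, ha1]
    have mfa2 : mf a ↑i2 = ↑i3 := by rw [mf_fin a i2, ha2]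
    have mfb1 : mf b ↑i1 = ↑i2 := by rw [mf_fin b i1, hb1]
    have mfb3 : mf b ↑i3 = ↑i4 := by rw [mf_fin b i3, hb2]
    have mfa4 : mf a ↑i4 = ↑i1 := mf_shift a i1.is_lt mfa1
    have mfa3 : mf a ↑i3 = ↑i2 := mf_shift a i2.is_lt mfa2
    have mfb2 : mf b ↑i2 = ↑i1 := mf_shift b i1.is_lt mfb1
    have mfb4 : mf b ↑i4 = ↑i3 := mf_shift b i3.is_lt mfb3
    obtain ⟨c1, he1⟩ : Even ((i4:ℕ) - ↑i1 - 1) := by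
      have := evenGap a i1.is_lt (by rw [mfa1]; omega)
      rwa [mfa1] at this
    obtain ⟨c2, he2⟩ : Even ((i3:ℕ) - ↑i2 - 1) := by
      have := evenGap a i2.is_lt (by rw [mfa2]; omega)
      rwa [mfa2] at this
    obtain ⟨c3, he3⟩ : Even ((i2:ℕ) - ↑i1 - 1) := by
      have := evenGap b i1.is_lt (by rw [mfb1]; omega)
      rwa [mfb1] at this
    obtain ⟨c4, he4⟩ : Even ((i4:ℕ) - ↑i3 - 1) := by
      have := evenGap b i3.is_lt (by rw [mfb3]; omega)
      rwa [mfb3] at this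
    have w1 : wgt (mf a) ↑i1 = ((i4:ℕ) - ↑i1 - 1)/2 := by
      unfold wgt; rw [mfa1, if_pos (by omega)]
    have w2 : wgt (mf a) ↑i2 = ((i3:ℕ) - ↑i2 - 1)/2 := by
      unfold wgt; rw [mfa2, if_pos h23]
    have w3 : wgt (mf a) ↑i3 = 0 := by
      unfold wgt; rw [mfa3, if_neg (by omega)]
    have w4 : wgt (mf a) ↑i4 = 0 := by
      unfold wgt; rw [mfa4, if_neg (by omega)]
    have w5 : wgt (mf b) ↑i1 = ((i2:ℕ) - ↑i1 - 1)/2 := by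
      unfold wgt; rw [mfb1, if_pos h12]
    have w6 : wgt (mf b) ↑i2 = 0 := by
      unfold wgt; rw [mfb2, if_neg (by omega)]
    have w7 : wgt (mf b) ↑i3 = ((i4:ℕ) - ↑i3 - 1)/2 := by
      unfold wgt; rw [mfb3, if_pos h34]
    have w8 : wgt (mf b) ↑i4 = 0 := by
      unfold wgt; rw [mfb4, if_neg (by omega)]
    omega
end StmtAux
/-- There is a partition `B^{n-k,k} = B₁ ⊔ B₂` (two matchings related by
an elementary change lie in different parts) such that, with `e₁ = ∑_{a ∈ B₁} 1_a` and
`e₂ = 1 - e₁ = ∑_{a ∈ B₂} 1_a`, every homogeneous element of `e_i A^{n-k,k} e_i` has even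
degree and every homogeneous element of `e_i A^{n-k,k} e_j` (`i ≠ j`) has odd degree;
equivalently, every nonzero homogeneous element of degree `d` in the component
`_a(A^{n-k,k})_b` has `d` even when `a, b` lie in the same part and odd otherwise. -/
theorem parity_partition (n k : ℕ) (hk : k ≤ n) (A : ArcAlg n k) :
    ∃ P : BB n k → Bool,
      (∀ a b : BB n k, ElemChange n a.1 b.1 → P a ≠ P b) ∧
      ((∑ a : BB n k, if P a then A.idem a else 0) +
        (∑ a : BB n k, if P a then 0 else A.idem a) = 1) ∧
      (∀ (a b : BB n k) (d : ℤ), ∀ x ∈ AcompDeg n k a.1 b.1 d, x ≠ 0 →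
        ((P a = P b → Even d) ∧ (P a ≠ P b → Odd d))) := by
  classical
  refine ⟨fun a => decide (StmtAux.Sm a.1 % 2 = 1), ?_, ?_, ?_⟩
  · intro a b h
    have hM2 := StmtAux.M2 a.1 b.1 h
    simp only [ne_eq, decide_eq_decide]
    omega
  · rw [← Finset.sum_add_distrib, A.one_def]
    apply Finset.sum_congr rfl
    intro a _
    by_cases h : decide (StmtAux.Sm a.1 % 2 = 1) = true
    · rw [if_pos h, if_pos h, add_zero]
      rfl
    · rw [if_neg h, if_neg h, zero_add]
      rfl
  · intro a b d x hx hx0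
    rw [AcompDeg, AddSubgroup.mem_map] at hx
    obtain ⟨y, hy, hyx⟩ := hx
    have hyne : y ≠ 0 := by
      intro hc
      apply hx0
      rw [← hyx, hc, map_zero]
    obtain ⟨g, hg⟩ := Finsupp.support_nonempty_iff.mpr hyne
    have hdeg : degLab n a.1 b.1 g = d := hy g hg
    rw [degLab] at hdeg
    have hcast : ∀ c : Circles n a.1 b.1, (if g c then (1:ℤ) else -1)
        = 1 - 2 * (if g c then 0 else 1) := by
      intro c
      by_cases h : g c <;> simp [h]
    have hcard : ∑ c : Circles n a.1 b.1, (if g c then (1:ℤ) else -1)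
        = (Fintype.card (Circles n a.1 b.1) : ℤ)
          - 2 * ∑ c : Circles n a.1 b.1, (if g c then (0:ℤ) else 1) := by
      rw [Finset.sum_congr rfl (fun c _ => hcast c), Finset.sum_sub_distrib,
        ← Finset.mul_sum]
      congr 1
      rw [Finset.sum_const, ← Finset.card_univ]
      simp
    rw [hcard] at hdeg
    have hnc : Nat.card (Circles n a.1 b.1) = Fintype.card (Circles n a.1 b.1) :=
      Nat.card_eq_fintype_card
    have hM1 := StmtAux.M1 n a.1 b.1
    rw [hnc] at hM1
    constructor
    · intro hP
      rw [decide_eq_decide] at hP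
      rw [Int.even_iff]
      omega
    · intro hP
      simp only [ne_eq, decide_eq_decide] at hP
      rw [Int.odd_iff]
      omega
end
end

section
/- The degree 0 part of A^{n−k,k} is isomorphic, as a ring, to the product of copies of ℤ indexed by B^{n−k,k}: (A^{n−k,k})⁰ ≅ ∏_{a∈B^{n−k,k}} ℤ·1_a. -/
/-!
Every circle of `W(a)b` passes through at least two of the `2n` points, and the circle through
a point where `a` and `b` differ passes through three; so `W(a)b` has fewer than `n` circles
when `a ≠ b` and exactly `n` when `a = b`. A basis tensor with `x` labels `X` has degree
`n + 2x - #circles`, so degree `0` forces `a = b` and all labels `𝟏`: the degree-`0` part is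
spanned by the `1_a`. Since `W(a)a` has no type III circle for `a ∈ B^{n-k,k}`, the ideal
misses the coefficient of `𝟏^{⊗n}` and `1_a` has infinite order. The `1_a` are complete
orthogonal idempotents, which makes `f ↦ ∑ f a • 1_a` a ring isomorphism from `ℤ^{B^{n-k,k}}`.
-/

noncomputable section
attribute [local instance 0] Classical.propDecidable

/-- The degree-`d` homogeneous part of the graded ring `A^{n-k,k}`. -/
def ArcAlg.degPart {n k : ℕ} (A : ArcAlg n k) (d : ℤ) : AddSubgroup A.R :=
  AddSubgroup.comap A.dec.toAddMonoidHom
    (AddSubgroup.pi Set.univ (fun p => AcompDeg n k p.1.1 p.2.1 d))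

namespace Matching

open Finset

variable {n : ℕ}

lemma f_injective : Function.Injective (Matching.f (n := n)) := by
  rintro ⟨f, _, _, _⟩ ⟨g, _, _, _⟩ rfl
  rfl

lemma cmk_eq_cmk_iff (a b : Matching n) {i j : Fin (2 * n)} :
    cmk n a b i = cmk n a b j ↔ Relation.EqvGen (fun i j => a.f i = j ∨ b.f i = j) i j :=
  Quotient.eq

lemma cmk_f_left (a b : Matching n) (i : Fin (2 * n)) : cmk n a b (a.f i) = cmk n a b i :=
  ((cmk_eq_cmk_iff a b).mpr (.rel _ _ (.inl rfl))).symm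

lemma cmk_f_right (a b : Matching n) (i : Fin (2 * n)) : cmk n a b (b.f i) = cmk n a b i :=
  ((cmk_eq_cmk_iff a b).mpr (.rel _ _ (.inr rfl))).symm

lemma cmk_self_eq_cmk_self_iff (a : Matching n) {i j : Fin (2 * n)} :
    cmk n a a i = cmk n a a j ↔ i = j ∨ a.f i = j := by
  have hequiv : Equivalence (fun i j : Fin (2 * n) => i = j ∨ a.f i = j) := by
    refine ⟨fun i => .inl rfl, ?_, ?_⟩
    · rintro i j (rfl | rfl)
      exacts [.inl rfl, .inr (a.invol i)]
    · rintro i j l (rfl | rfl) (rfl | rfl)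
      exacts [.inl rfl, .inr rfl, .inr rfl, .inl (a.invol i).symm]
  rw [cmk_eq_cmk_iff]
  constructor
  · refine fun h => hequiv.eqvGen_iff.mp (Relation.EqvGen.mono ?_ i j h)
    exact fun i j h => .inr (h.elim id id)
  · rintro (rfl | rfl)
    exacts [.refl _, .rel _ _ (.inl rfl)]

lemma sum_card_fiber_cmk (a b : Matching n) :
    ∑ c : Circles n a b, #{i | cmk n a b i = c} = 2 * n := by
  simpa using (card_eq_sum_card_fiberwise (f := cmk n a b) (s := univ) (t := univ)
    (fun _ _ => mem_univ _)).symm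

lemma card_fiber_cmk_self (a : Matching n) (c : Circles n a a) :
    #{i | cmk n a a i = c} = 2 := by
  induction c using Quotient.inductionOn with
  | h j =>
    change #{i | cmk n a a i = cmk n a a j} = 2
    have hfiber : ({i | cmk n a a i = cmk n a a j} : Finset _) = {j, a.f j} := by
      ext i
      simp only [mem_filter, mem_univ, true_and, mem_insert, mem_singleton,
        cmk_self_eq_cmk_self_iff]
      constructor
      · rintro (rfl | rfl)
        exacts [.inl rfl, .inr (a.invol i).symm]
      · rintro (rfl | rfl)
        exacts [.inl rfl, .inr (a.invol j)]
    rw [hfiber, card_pair (a.noFix j).symm]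

lemma two_le_card_fiber_cmk (a b : Matching n) (c : Circles n a b) :
    2 ≤ #{i | cmk n a b i = c} := by
  induction c using Quotient.inductionOn with
  | h j =>
    calc 2 = #{j, a.f j} := (card_pair (a.noFix j).symm).symm
      _ ≤ #{i | cmk n a b i = cmk n a b j} := by
        refine card_le_card fun i hi => ?_
        rcases mem_insert.mp hi with rfl | hi
        · simp
        · simp [mem_singleton.mp hi, cmk_f_left]

lemma three_le_card_fiber_cmk (a b : Matching n) {j : Fin (2 * n)} (hj : a.f j ≠ b.f j) :
    3 ≤ #{i | cmk n a b i = cmk n a b j} := by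
  calc 3 = #{j, a.f j, b.f j} := by
        rw [card_insert_of_notMem, card_pair hj]
        simp only [mem_insert, mem_singleton, not_or]
        exact ⟨(a.noFix j).symm, (b.noFix j).symm⟩
    _ ≤ #{i | cmk n a b i = cmk n a b j} := by
        refine card_le_card fun i hi => ?_
        simp only [mem_insert, mem_singleton] at hi
        rcases hi with rfl | rfl | rfl <;> simp [cmk_f_left, cmk_f_right]

lemma card_circles_self (a : Matching n) : Fintype.card (Circles n a a) = n := by
  have h := sum_card_fiber_cmk a a
  simp only [card_fiber_cmk_self, sum_const, card_univ, smul_eq_mul] at h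
  omega

lemma card_circles_lt (a b : Matching n) (hab : a.f ≠ b.f) : Fintype.card (Circles n a b) < n := by
  obtain ⟨j, hj⟩ := Function.ne_iff.mp hab
  have hlt : ∑ _c : Circles n a b, 2 < ∑ c : Circles n a b, #{i | cmk n a b i = c} :=
    sum_lt_sum (fun c _ => two_le_card_fiber_cmk a b c)
      ⟨cmk n a b j, mem_univ _, three_le_card_fiber_cmk a b hj⟩
  rw [sum_card_fiber_cmk, sum_const, card_univ, smul_eq_mul] at hlt
  omega

end Matching

section Degree

open Finset

variable {n : ℕ}

lemma degLab_eq (a b : Matching n) (g : Lab n a b) :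
    degLab n a b g = n + 2 * #{c | g c = true} - Fintype.card (Circles n a b) := by
  have hsign : ∀ c, (if g c then (1 : ℤ) else -1) = 2 * (if g c = true then 1 else 0) - 1 := by
    intro c
    cases g c <;> rfl
  simp only [degLab, hsign, sum_sub_distrib, ← mul_sum, sum_const, card_univ, natCast_card_filter,
    Int.nsmul_eq_mul, mul_one]
  ring_nf

lemma degLab_ne_zero (a b : Matching n) (hab : a.f ≠ b.f) (g : Lab n a b) :
    degLab n a b g ≠ 0 := by
  have := a.card_circles_lt b hab
  rw [degLab_eq]
  omega

lemma degLab_self_eq_zero_iff (a : Matching n) (g : Lab n a a) :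
    degLab n a a g = 0 ↔ g = labOne n a a := by
  rw [degLab_eq, a.card_circles_self]
  simp only [add_sub_cancel_left, mul_eq_zero, OfNat.ofNat_ne_zero, false_or, Nat.cast_eq_zero,
    card_eq_zero, filter_eq_empty_iff, mem_univ, true_implies, Bool.not_eq_true]
  exact ⟨funext, fun h c => congrFun h c⟩

lemma eq_zero_of_mem_FMdeg_zero (a b : Matching n) (hab : a.f ≠ b.f) {x : FM n a b}
    (hx : x ∈ FMdeg n a b 0) : x = 0 :=
  Finsupp.support_eq_empty.mp
    (eq_empty_of_forall_notMem fun g hg => degLab_ne_zero a b hab g (hx g hg))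

lemma eq_zsmul_oneBasis_of_mem_FMdeg_zero (a : Matching n) {x : FM n a a}
    (hx : x ∈ FMdeg n a a 0) : x = x (labOne n a a) • oneBasis n a := by
  have hsupp : x.support ⊆ {labOne n a a} := fun g hg =>
    mem_singleton.mpr ((degLab_self_eq_zero_iff a g).mp (hx g hg))
  conv_lhs => rw [Finsupp.support_subset_singleton.mp hsupp]
  simp [oneBasis]

lemma oneBasis_mem_FMdeg_zero (a : Matching n) : oneBasis n a ∈ FMdeg n a a 0 := by
  intro g hg
  rw [Finsupp.support_single_subset hg |> mem_singleton.mp, degLab_self_eq_zero_iff]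

end Degree

section Quotient

variable {n k : ℕ}

lemma not_hasTypeIII_self {a : Matching n} (ha : a.inB n k) : ¬ hasTypeIII n k a a := by
  rintro ⟨c, ⟨i, j, hij, hi, hj, rfl, hc⟩ | ⟨i, j, hij, hi, hj, rfl, hc⟩⟩ <;>
    obtain rfl | rfl := (a.cmk_self_eq_cmk_self_iff).mp hc.symm
  exacts [hij rfl, ha.1 i hi hj, hij rfl, ha.2 i hi hj]

/-- Without type III circles the ideal is spanned by tensors carrying some `X`, so it misses
the coefficient of `𝟏^{⊗n}`. -/
lemma Icomp_self_le_ker {a : Matching n} (ha : a.inB n k) :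
    Icomp n k a a ≤ (Finsupp.applyAddHom (labOne n a a)).ker := by
  rw [Icomp, if_neg (not_hasTypeIII_self ha), AddSubgroup.closure_le]
  rintro _ ⟨g, c, -, hgc, rfl⟩
  have hg : g ≠ labOne n a a := fun h => by simp [h, labOne] at hgc
  simp [Finsupp.single_eq_of_ne' hg]

/-- The coefficient of `1_a` in `_a(A^{n-k,k})_a`. -/
def unitCoeff (a : BB n k) : Acomp n k a.1 a.1 →+ ℤ :=
  QuotientAddGroup.lift _ (Finsupp.applyAddHom (labOne n a.1 a.1)) (Icomp_self_le_ker a.2)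

lemma unitCoeff_mk (a : BB n k) (x : FM n a.1 a.1) :
    unitCoeff a (QuotientAddGroup.mk' _ x) = x (labOne n a.1 a.1) :=
  QuotientAddGroup.lift_mk' _ _ _

lemma eq_zero_of_mem_AcompDeg_zero {a b : Matching n} (hab : a.f ≠ b.f) {y : Acomp n k a b}
    (hy : y ∈ AcompDeg n k a b 0) : y = 0 := by
  obtain ⟨x, hx, rfl⟩ := hy
  rw [eq_zero_of_mem_FMdeg_zero a b hab hx, map_zero]

lemma eq_unitCoeff_zsmul_of_mem_AcompDeg_zero (a : BB n k) {y : Acomp n k a.1 a.1}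
    (hy : y ∈ AcompDeg n k a.1 a.1 0) :
    y = unitCoeff a y • QuotientAddGroup.mk' _ (oneBasis n a.1) := by
  obtain ⟨x, hx, rfl⟩ := hy
  conv_lhs => rw [eq_zsmul_oneBasis_of_mem_FMdeg_zero a.1 hx]
  rw [map_zsmul, unitCoeff_mk]

end Quotient

lemma OrthogonalIdempotents.sum_zsmul_mul_sum_zsmul {R ι : Type*} [Ring R] [Fintype ι]
    {e : ι → R} (he : OrthogonalIdempotents e) (f g : ι → ℤ) :
    (∑ i, f i • e i) * (∑ i, g i • e i) = ∑ i, (f i * g i) • e i := by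
  classical
  simp only [Finset.sum_mul_sum, smul_mul_smul_comm, he.mul_eq, smul_ite, smul_zero,
    Finset.sum_ite_eq, Finset.mem_univ, if_true]

namespace ArcAlg

variable {n k : ℕ} (A : ArcAlg n k)

lemma idem_mul_idem_of_ne {a b : BB n k} (h : a ≠ b) : A.idem a * A.idem b = 0 :=
  A.mul_apart a a b b _ _ h

lemma sum_idem : ∑ a, A.idem a = 1 :=
  A.one_def.symm

lemma isIdempotentElem_idem (a : BB n k) : IsIdempotentElem (A.idem a) := by
  have h := mul_one (A.idem a)
  rwa [← A.sum_idem, Finset.mul_sum, Finset.sum_eq_single a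
    (fun b _ hb => A.idem_mul_idem_of_ne hb.symm) (by simp)] at h

lemma completeOrthogonalIdempotents_idem : CompleteOrthogonalIdempotents A.idem :=
  ⟨⟨A.isIdempotentElem_idem, fun _ _ h => A.idem_mul_idem_of_ne h⟩, A.sum_idem⟩

lemma mem_degPart_iff (d : ℤ) (x : A.R) :
    x ∈ A.degPart d ↔ ∀ p, A.dec x p ∈ AcompDeg n k p.1.1 p.2.1 d := by
  simp only [degPart, AddSubgroup.mem_comap, AddSubgroup.mem_pi, Set.mem_univ, true_implies]
  rfl

lemma dec_idem_self (a : BB n k) :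
    A.dec (A.idem a) (a, a) = QuotientAddGroup.mk' _ (oneBasis n a.1) := by
  rw [idem, incl, AddEquiv.apply_symm_apply, Pi.single_eq_same]

lemma dec_idem_of_ne {a : BB n k} {p : BB n k × BB n k} (hp : p ≠ (a, a)) :
    A.dec (A.idem a) p = 0 := by
  rw [idem, incl, AddEquiv.apply_symm_apply, Pi.single_eq_of_ne hp]

lemma idem_mem_degPart_zero (a : BB n k) : A.idem a ∈ A.degPart 0 := by
  refine (A.mem_degPart_iff 0 _).mpr fun p => ?_
  by_cases hp : p = (a, a)
  · subst hp
    exact A.dec_idem_self a ▸ ⟨_, oneBasis_mem_FMdeg_zero a.1, rfl⟩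
  · exact A.dec_idem_of_ne hp ▸ zero_mem _

lemma sum_zsmul_idem_mem_degPart_zero (f : BB n k → ℤ) :
    ∑ a, f a • A.idem a ∈ A.degPart 0 :=
  sum_mem fun a _ => zsmul_mem (A.idem_mem_degPart_zero a) _

def diagCoeff : A.R →+ (BB n k → ℤ) :=
  AddMonoidHom.pi fun a =>
    (unitCoeff a).comp ((Pi.evalAddMonoidHom _ (a, a)).comp A.dec.toAddMonoidHom)

lemma diagCoeff_apply (x : A.R) (a : BB n k) :
    A.diagCoeff x a = unitCoeff a (A.dec x (a, a)) :=
  rfl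

lemma diagCoeff_sum_zsmul_idem (f : BB n k → ℤ) : A.diagCoeff (∑ a, f a • A.idem a) = f := by
  funext b
  rw [map_sum, Finset.sum_apply, Finset.sum_eq_single b]
  · rw [map_zsmul, Pi.smul_apply, diagCoeff_apply, dec_idem_self, unitCoeff_mk]
    simp [oneBasis]
  · intro a _ hab
    rw [map_zsmul, Pi.smul_apply, diagCoeff_apply, A.dec_idem_of_ne (by simpa using hab.symm),
      map_zero, smul_zero]
  · simp

/-- Components of degree `0` vanish off the diagonal and are multiples of `1_a` on it. -/
lemma sum_diagCoeff_zsmul_idem {x : A.R} (hx : x ∈ A.degPart 0) :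
    ∑ a, A.diagCoeff x a • A.idem a = x := by
  rw [mem_degPart_iff] at hx
  apply A.dec.injective
  funext ⟨b, c⟩
  rw [map_sum, Finset.sum_apply]
  by_cases hbc : b = c
  · subst hbc
    rw [Finset.sum_eq_single b (fun a _ hab => by
        rw [map_zsmul, Pi.smul_apply, A.dec_idem_of_ne (by simpa using hab.symm), smul_zero])
      (by simp), map_zsmul, Pi.smul_apply, dec_idem_self, diagCoeff_apply]
    exact (eq_unitCoeff_zsmul_of_mem_AcompDeg_zero b (hx (b, b))).symm
  · rw [eq_zero_of_mem_AcompDeg_zero (fun h => hbc (Subtype.ext (Matching.f_injective h)))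
      (hx (b, c))]
    refine Finset.sum_eq_zero fun a _ => ?_
    rw [map_zsmul, Pi.smul_apply, A.dec_idem_of_ne (fun h => hbc (by simp_all)), smul_zero]

def degZeroEquiv : A.degPart 0 ≃+ (BB n k → ℤ) where
  toFun x := A.diagCoeff x.1
  invFun f := ⟨∑ a, f a • A.idem a, A.sum_zsmul_idem_mem_degPart_zero f⟩
  left_inv x := Subtype.ext (A.sum_diagCoeff_zsmul_idem x.2)
  right_inv := A.diagCoeff_sum_zsmul_idem
  map_add' x y := map_add A.diagCoeff x.1 y.1

lemma coe_degZeroEquiv_symm (f : BB n k → ℤ) :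
    (A.degZeroEquiv.symm f : A.R) = ∑ a, f a • A.idem a :=
  rfl

lemma exists_degZeroEquiv_sum_zsmul_idem (f : BB n k → ℤ) :
    ∃ h, A.degZeroEquiv ⟨∑ a, f a • A.idem a, h⟩ = f :=
  ⟨A.sum_zsmul_idem_mem_degPart_zero f, A.diagCoeff_sum_zsmul_idem f⟩

end ArcAlg

theorem deg_zero_part_general (n k : ℕ) (A : ArcAlg n k) :
    ∃ φ : A.degPart 0 ≃+ (BB n k → ℤ),
      (∀ x y : A.degPart 0, ∃ h : (x : A.R) * (y : A.R) ∈ A.degPart 0,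
          φ ⟨(x : A.R) * (y : A.R), h⟩ = φ x * φ y) ∧
      (∃ h1 : (1 : A.R) ∈ A.degPart 0, φ ⟨1, h1⟩ = 1) ∧
      (∀ a : BB n k, ∃ ha : A.idem a ∈ A.degPart 0,
          φ ⟨A.idem a, ha⟩ = fun b => if b = a then 1 else 0) := by
  have he := A.completeOrthogonalIdempotents_idem
  refine ⟨A.degZeroEquiv, fun x y => ?_, ?_, fun a => ?_⟩
  · have hxy : (x : A.R) * y =
        ∑ a, (A.degZeroEquiv x a * A.degZeroEquiv y a) • A.idem a := by
      rw [← he.sum_zsmul_mul_sum_zsmul, ← A.coe_degZeroEquiv_symm, ← A.coe_degZeroEquiv_symm,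
        AddEquiv.symm_apply_apply, AddEquiv.symm_apply_apply]
    rw [hxy]
    exact A.exists_degZeroEquiv_sum_zsmul_idem _
  · have h1 : (1 : A.R) = ∑ a, (1 : BB n k → ℤ) a • A.idem a := by
      simp [← he.complete]
    rw [h1]
    exact A.exists_degZeroEquiv_sum_zsmul_idem _
  · have hidem : A.idem a = ∑ b, (if b = a then (1 : ℤ) else 0) • A.idem b := by
      simp [ite_smul]
    rw [hidem]
    exact A.exists_degZeroEquiv_sum_zsmul_idem _

/-- **Statement 8.** The degree-`0` part of `A^{n-k,k}` is isomorphic, as a ring, to the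
product of copies of `ℤ` indexed by `B^{n-k,k}`, with the idempotent `1_a` corresponding
to the indicator function of `a`. -/
theorem deg_zero_part (n k : ℕ) (hk : k ≤ n) (A : ArcAlg n k) :
    ∃ φ : A.degPart 0 ≃+ (BB n k → ℤ),
      (∀ x y : A.degPart 0, ∃ h : (x : A.R) * (y : A.R) ∈ A.degPart 0,
          φ ⟨(x : A.R) * (y : A.R), h⟩ = φ x * φ y) ∧
      (∃ h1 : (1 : A.R) ∈ A.degPart 0, φ ⟨1, h1⟩ = 1) ∧
      (∀ a : BB n k, ∃ ha : A.idem a ∈ A.degPart 0,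
          φ ⟨A.idem a, ha⟩ = fun b => if b = a then 1 else 0) :=
  deg_zero_part_general n k A
end
end
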